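/- arXiv:2501.06549 — 11 statements merged into one kernel-verified Lean document; each statement's English description precedes it below -/
import Mathlib

section
/- Assume all parameters d_W, d_H, d_G, d_B, r_W, r_H, c_W, c_H, e_W, e_H are positive, κ1, κ2 ∈ [0,1), and s ∈ ℝ. If (W, H, G, B) is a twice continuously differentiable solution of the traveling wave system (TW) on ℝ with W(ξ), H(ξ), G(ξ), B(ξ) > 0 for all ξ ∈ ℝ, (W, H, G, B)(ξ) → (0,0,0,0) as ξ → −∞, and (W, H, G, B)(ξ) → (W*, H*, G*, B*) as ξ → +∞, then 0 < W(ξ) < 1, 0 < H(ξ) < 1, 0 < G(ξ) < 1 and 0 < B(ξ) < 1 for all ξ ∈ ℝ. -/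
open Real Filter Set Topology


lemma deriv_parts {f : ℝ → ℝ} (hf : ContDiff ℝ 2 f) :
    Differentiable ℝ f ∧ Differentiable ℝ (deriv f) := by
  have h2 : (2 : WithTop ℕ∞) = 1 + 1 := by norm_num
  rw [h2, contDiff_succ_iff_deriv] at hf
  exact ⟨hf.1, hf.2.2.differentiable one_ne_zero⟩

lemma deriv2_nonpos_of_isLocalMax {f : ℝ → ℝ} (hf : ContDiff ℝ 2 f) {x : ℝ}
    (hx : IsLocalMax f x) : deriv (deriv f) x ≤ 0 := by
  by_contra hpos
  push_neg at hpos
  obtain ⟨hdf, hdf'⟩ := deriv_parts hf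
  have hg0 : deriv f x = 0 := hx.deriv_eq_zero
  have hd : HasDerivAt (deriv f) (deriv (deriv f) x) x := (hdf' x).hasDerivAt
  have hslope : Tendsto (slope (deriv f) x) (𝓝[≠] x) (𝓝 (deriv (deriv f) x)) :=
    hasDerivAt_iff_tendsto_slope.1 hd
  have hev : ∀ᶠ y in 𝓝[>] x, 0 < slope (deriv f) x y :=
    ((hslope.eventually (eventually_gt_nhds hpos)).filter_mono
      (nhdsWithin_mono x (fun y hy => ne_of_gt hy)))
  have hev' : ∀ᶠ y in 𝓝[>] x, 0 < deriv f y := by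
    filter_upwards [hev, self_mem_nhdsWithin] with y hy (hy' : x < y)
    rw [slope_def_field, hg0, sub_zero] at hy
    have h2 := mul_pos hy (sub_pos.2 hy')
    rwa [div_mul_cancel₀ _ (sub_ne_zero.2 (ne_of_gt hy'))] at h2
  obtain ⟨u, hu, hIoo⟩ := mem_nhdsGT_iff_exists_Ioo_subset.1 hev'
  obtain ⟨ε, hε, hball⟩ := Metric.eventually_nhds_iff.1 hx
  set t := min u (x + ε) with ht
  have hxt : x < t := lt_min hu (by linarith)
  set m := (x + t) / 2 with hm
  have hxm : x < m := by simp [hm]; linarith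
  have hmt : m < t := by simp [hm]; linarith
  have hmono : StrictMonoOn f (Icc x m) := by
    apply strictMonoOn_of_deriv_pos (convex_Icc _ _) (hdf.continuous.continuousOn)
    intro y hy
    rw [interior_Icc] at hy
    exact hIoo ⟨hy.1, lt_of_lt_of_le (hy.2.trans hmt) (min_le_left _ _)⟩
  have h1 : f x < f m := hmono ⟨le_rfl, hxm.le⟩ ⟨hxm.le, le_rfl⟩ hxm
  have h2 : f m ≤ f x := by
    apply hball
    have : m < x + ε := lt_of_lt_of_le hmt (le_trans (min_le_right _ _) le_rfl)
    rw [Real.dist_eq, abs_lt]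
    constructor <;> linarith
  linarith

lemma exists_global_max {f : ℝ → ℝ} (hf : Continuous f) {a b : ℝ}
    (ha : Tendsto f atBot (nhds a)) (hb : Tendsto f atTop (nhds b)) {ξ1 : ℝ}
    (h1 : a < f ξ1) (h2 : b < f ξ1) :
    ∃ ξ0, (∀ ξ, f ξ ≤ f ξ0) ∧ IsLocalMax f ξ0 ∧ f ξ1 ≤ f ξ0 := by
  obtain ⟨R1, hR1⟩ := (ha.eventually_lt_const h1).exists_forall_of_atBot
  obtain ⟨R2, hR2⟩ := (hb.eventually_lt_const h2).exists_forall_of_atTop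
  set c := min R1 ξ1
  set d := max R2 ξ1
  have hcd : c ≤ d := le_trans (min_le_right _ _) (le_max_right _ _)
  have hne : (Icc c d).Nonempty := ⟨ξ1, min_le_right _ _, le_max_right _ _⟩
  obtain ⟨ξ0, hξ0mem, hmax⟩ := (isCompact_Icc (a := c) (b := d)).exists_isMaxOn hne hf.continuousOn
  have hξ1le : f ξ1 ≤ f ξ0 := hmax ⟨min_le_right _ _, le_max_right _ _⟩
  have hglob : ∀ ξ, f ξ ≤ f ξ0 := by
    intro ξ
    by_cases hmem : ξ ∈ Icc c d
    · exact hmax hmem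
    · simp only [mem_Icc, not_and_or, not_le] at hmem
      rcases hmem with h | h
      · exact le_trans (hR1 ξ (le_trans h.le (min_le_left _ _))).le hξ1le
      · exact le_trans (hR2 ξ (le_trans (le_max_left _ _) h.le)).le hξ1le
  exact ⟨ξ0, hglob, Filter.Eventually.of_forall (fun y => hglob y), hξ1le⟩

lemma lt_one_of_wave {f : ℝ → ℝ} (hf : ContDiff ℝ 2 f) {a b : ℝ}
    (ha : Tendsto f atBot (nhds a)) (hb : Tendsto f atTop (nhds b))
    (ha1 : a < 1) (hb1 : b < 1)
    (key : ∀ ξ, 1 ≤ f ξ → deriv f ξ = 0 → deriv (deriv f) ξ ≤ 0 → False) :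
    ∀ ξ, f ξ < 1 := by
  by_contra h
  push_neg at h
  obtain ⟨ξ1, hξ1⟩ := h
  obtain ⟨ξ0, _, hloc, hle⟩ := exists_global_max hf.continuous ha hb
    (lt_of_lt_of_le ha1 hξ1) (lt_of_lt_of_le hb1 hξ1)
  exact key ξ0 (le_trans hξ1 hle) hloc.deriv_eq_zero (deriv2_nonpos_of_isLocalMax hf hloc)

/-- Lemma 3.1: a strictly positive traveling wave connecting the extinction state
to the coexistence state takes values strictly between 0 and 1 in every component. -/
theorem savanna_wave_bounds_extinction
    (dW dH dG dB rW rH cW cH eW eH κ1 κ2 s : ℝ)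
    (hdW : 0 < dW) (hdH : 0 < dH) (hdG : 0 < dG) (hdB : 0 < dB)
    (hrW : 0 < rW) (hrH : 0 < rH) (hcW : 0 < cW) (hcH : 0 < cH)
    (heW : 0 < eW) (heH : 0 < eH)
    (hκ1 : 0 ≤ κ1) (hκ1' : κ1 < 1) (hκ2 : 0 ≤ κ2) (hκ2' : κ2 < 1)
    (W H G B : ℝ → ℝ)
    (hWc : ContDiff ℝ 2 W) (hHc : ContDiff ℝ 2 H)
    (hGc : ContDiff ℝ 2 G) (hBc : ContDiff ℝ 2 B)
    (hWpos : ∀ ξ, 0 < W ξ) (hHpos : ∀ ξ, 0 < H ξ)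
    (hGpos : ∀ ξ, 0 < G ξ) (hBpos : ∀ ξ, 0 < B ξ)
    (heqW : ∀ ξ, dW * deriv (deriv W) ξ - s * deriv W ξ
        + rW * W ξ * (1 - W ξ - κ1 * H ξ) - cW * B ξ * W ξ = 0)
    (heqH : ∀ ξ, dH * deriv (deriv H) ξ - s * deriv H ξ
        + rH * H ξ * (1 - H ξ - κ2 * W ξ) - cH * G ξ * H ξ = 0)
    (heqG : ∀ ξ, dG * deriv (deriv G) ξ - s * deriv G ξ + eH * G ξ * (H ξ - G ξ) = 0)
    (heqB : ∀ ξ, dB * deriv (deriv B) ξ - s * deriv B ξ + eW * B ξ * (W ξ - B ξ) = 0)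
    (hWbot : Tendsto W atBot (nhds 0)) (hHbot : Tendsto H atBot (nhds 0))
    (hGbot : Tendsto G atBot (nhds 0)) (hBbot : Tendsto B atBot (nhds 0))
    (hWtop : Tendsto W atTop (nhds ((rW * (rH + cH) - rW * rH * κ1) /
        ((rW + cW) * (rH + cH) - rW * rH * κ1 * κ2))))
    (hHtop : Tendsto H atTop (nhds ((rH * (rW + cW) - rW * rH * κ2) /
        ((rW + cW) * (rH + cH) - rW * rH * κ1 * κ2))))
    (hGtop : Tendsto G atTop (nhds ((rH * (rW + cW) - rW * rH * κ2) /
        ((rW + cW) * (rH + cH) - rW * rH * κ1 * κ2))))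
    (hBtop : Tendsto B atTop (nhds ((rW * (rH + cH) - rW * rH * κ1) /
        ((rW + cW) * (rH + cH) - rW * rH * κ1 * κ2)))) :
    ∀ ξ, (0 < W ξ ∧ W ξ < 1) ∧ (0 < H ξ ∧ H ξ < 1) ∧
         (0 < G ξ ∧ G ξ < 1) ∧ (0 < B ξ ∧ B ξ < 1) := by
  have hκ12 : κ1 * κ2 < 1 := by nlinarith
  have hD : 0 < (rW + cW) * (rH + cH) - rW * rH * κ1 * κ2 := by
    nlinarith [mul_pos (mul_pos hrW hrH) (sub_pos.2 hκ12), mul_pos hcW hrH,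
      mul_pos hrW hcH, mul_pos hcW hcH]
  have hWstar : (rW * (rH + cH) - rW * rH * κ1) /
      ((rW + cW) * (rH + cH) - rW * rH * κ1 * κ2) < 1 := by
    rw [div_lt_one hD]
    nlinarith [mul_pos hcW (add_pos hrH hcH),
      mul_nonneg (mul_nonneg (mul_nonneg hrW.le hrH.le) hκ1) (sub_nonneg.2 hκ2'.le)]
  have hHstar : (rH * (rW + cW) - rW * rH * κ2) /
      ((rW + cW) * (rH + cH) - rW * rH * κ1 * κ2) < 1 := by
    rw [div_lt_one hD]
    nlinarith [mul_pos hcH (add_pos hrW hcW),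
      mul_nonneg (mul_nonneg (mul_nonneg hrW.le hrH.le) hκ2) (sub_nonneg.2 hκ1'.le)]
  have hW1 : ∀ ξ, W ξ < 1 := by
    apply lt_one_of_wave hWc hWbot hWtop zero_lt_one hWstar
    intro ξ h1 hd hdd
    have hE := heqW ξ
    rw [hd, mul_zero] at hE
    have t1 : 1 - W ξ - κ1 * H ξ ≤ 0 := by nlinarith [mul_nonneg hκ1 (hHpos ξ).le]
    have t2 : rW * W ξ * (1 - W ξ - κ1 * H ξ) ≤ 0 :=
      mul_nonpos_of_nonneg_of_nonpos (mul_pos hrW (hWpos ξ)).le t1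
    have t3 : 0 < cW * B ξ * W ξ := mul_pos (mul_pos hcW (hBpos ξ)) (hWpos ξ)
    have t4 : dW * deriv (deriv W) ξ ≤ 0 := mul_nonpos_of_nonneg_of_nonpos hdW.le hdd
    linarith
  have hH1 : ∀ ξ, H ξ < 1 := by
    apply lt_one_of_wave hHc hHbot hHtop zero_lt_one hHstar
    intro ξ h1 hd hdd
    have hE := heqH ξ
    rw [hd, mul_zero] at hE
    have t1 : 1 - H ξ - κ2 * W ξ ≤ 0 := by nlinarith [mul_nonneg hκ2 (hWpos ξ).le]
    have t2 : rH * H ξ * (1 - H ξ - κ2 * W ξ) ≤ 0 :=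
      mul_nonpos_of_nonneg_of_nonpos (mul_pos hrH (hHpos ξ)).le t1
    have t3 : 0 < cH * G ξ * H ξ := mul_pos (mul_pos hcH (hGpos ξ)) (hHpos ξ)
    have t4 : dH * deriv (deriv H) ξ ≤ 0 := mul_nonpos_of_nonneg_of_nonpos hdH.le hdd
    linarith
  have hG1 : ∀ ξ, G ξ < 1 := by
    apply lt_one_of_wave hGc hGbot hGtop zero_lt_one hHstar
    intro ξ h1 hd hdd
    have hE := heqG ξ
    rw [hd, mul_zero] at hE
    have t1 : H ξ - G ξ < 0 := by linarith [hH1 ξ]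
    have t2 : eH * G ξ * (H ξ - G ξ) < 0 :=
      mul_neg_of_pos_of_neg (mul_pos heH (hGpos ξ)) t1
    have t4 : dG * deriv (deriv G) ξ ≤ 0 := mul_nonpos_of_nonneg_of_nonpos hdG.le hdd
    linarith
  have hB1 : ∀ ξ, B ξ < 1 := by
    apply lt_one_of_wave hBc hBbot hBtop zero_lt_one hWstar
    intro ξ h1 hd hdd
    have hE := heqB ξ
    rw [hd, mul_zero] at hE
    have t1 : W ξ - B ξ < 0 := by linarith [hW1 ξ]
    have t2 : eW * B ξ * (W ξ - B ξ) < 0 :=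
      mul_neg_of_pos_of_neg (mul_pos heW (hBpos ξ)) t1
    have t4 : dB * deriv (deriv B) ξ ≤ 0 := mul_nonpos_of_nonneg_of_nonpos hdB.le hdd
    linarith
  intro ξ
  exact ⟨⟨hWpos ξ, hW1 ξ⟩, ⟨hHpos ξ, hH1 ξ⟩, ⟨hGpos ξ, hG1 ξ⟩, ⟨hBpos ξ, hB1 ξ⟩⟩
end

section
/- Assume all parameters d_W, d_H, d_G, d_B, r_W, r_H, c_W, c_H, e_W, e_H are positive, κ1, κ2 ∈ [0,1), and s ∈ ℝ. If (W, H, G, B) is a twice continuously differentiable solution of the traveling wave system (TW) on ℝ with W(ξ), H(ξ), G(ξ), B(ξ) > 0 for all ξ ∈ ℝ, (W, H, G, B)(ξ) → (0, H_*, G_*, 0) as ξ → −∞, and (W, H, G, B)(ξ) → (W*, H*, G*, B*) as ξ → +∞, then 0 < W(ξ) < 1, 0 < H(ξ) < 1, 0 < G(ξ) < 1 and 0 < B(ξ) < 1 for all ξ ∈ ℝ. -/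
open Real Filter

private lemma aux_exists_global_max (f : ℝ → ℝ) (hf : Continuous f) {a b c : ℝ}
    (ha : Tendsto f atBot (nhds a)) (hb : Tendsto f atTop (nhds b))
    (hac : a < c) (hbc : b < c) {ξ1 : ℝ} (h1 : c ≤ f ξ1) :
    ∃ x0, ∀ x, f x ≤ f x0 := by
  obtain ⟨lo, hlo⟩ := eventually_atBot.mp (ha.eventually_lt_const hac)
  obtain ⟨hi, hhi⟩ := eventually_atTop.mp (hb.eventually_lt_const hbc)
  set lo' := min lo ξ1 with hlo'
  set hi' := max hi ξ1 with hhi'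
  have hmem : ξ1 ∈ Set.Icc lo' hi' := ⟨min_le_right _ _, le_max_right _ _⟩
  obtain ⟨x0, hx0K, hx0max⟩ := (isCompact_Icc (a := lo') (b := hi')).exists_isMaxOn
    ⟨ξ1, hmem⟩ hf.continuousOn
  refine ⟨x0, fun x => ?_⟩
  have hfx1 : f ξ1 ≤ f x0 := hx0max hmem
  rcases le_or_gt x hi' with hxh | hxh
  · rcases le_or_gt lo' x with hxl | hxl
    · exact hx0max ⟨hxl, hxh⟩
    · have : f x < c := hlo x (le_of_lt (lt_of_lt_of_le hxl (min_le_left _ _)))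
      linarith
  · have : f x < c := hhi x (le_of_lt (lt_of_le_of_lt (le_max_left _ _) hxh))
    linarith

private lemma aux_max_derivs {f : ℝ → ℝ} (hf : ContDiff ℝ 2 f) {x0 : ℝ}
    (hmax : ∀ x, f x ≤ f x0) :
    deriv f x0 = 0 ∧ deriv (deriv f) x0 ≤ 0 := by
  have hloc : IsLocalMax f x0 := by
    have : IsMaxOn f Set.univ x0 := fun x _ => hmax x
    exact this.isLocalMax Filter.univ_mem
  have hd1 : deriv f x0 = 0 := hloc.deriv_eq_zero
  refine ⟨hd1, ?_⟩
  by_contra hcon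
  push_neg at hcon
  have hf1 : ContDiff ℝ 1 (deriv f) :=
    (contDiff_succ_iff_deriv.mp (show ContDiff ℝ (1+1) f by norm_num [hf])).2.2
  have hcont2 : Continuous (deriv (deriv f)) := hf1.continuous_deriv le_rfl
  have hev : ∀ᶠ x in nhds x0, 0 < deriv (deriv f) x :=
    hcont2.continuousAt.eventually (eventually_gt_nhds hcon)
  obtain ⟨δ, hδpos, hδ⟩ := Metric.eventually_nhds_iff.mp hev
  have hmono1 : StrictMonoOn (deriv f) (Set.Icc x0 (x0 + δ/2)) := by
    apply strictMonoOn_of_deriv_pos (convex_Icc _ _) hf1.continuous.continuousOn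
    intro x hx
    rw [interior_Icc] at hx
    apply hδ
    rw [Real.dist_eq, abs_of_nonneg (by linarith [hx.1])]
    linarith [hx.2]
  have hmono2 : StrictMonoOn f (Set.Icc x0 (x0 + δ/2)) := by
    apply strictMonoOn_of_deriv_pos (convex_Icc _ _)
      (hf.continuous).continuousOn
    intro x hx
    rw [interior_Icc] at hx
    have := hmono1 ⟨le_rfl, by linarith⟩ ⟨hx.1.le, hx.2.le⟩ hx.1
    rw [hd1] at this
    exact this
  have : f x0 < f (x0 + δ/2) :=
    hmono2 ⟨le_rfl, by linarith⟩ ⟨by linarith, le_rfl⟩ (by linarith)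
  linarith [hmax (x0 + δ/2)]

/-- Lemma 3.1 (variant): a strictly positive traveling wave connecting the grass-vegetation state
to the coexistence state takes values strictly between 0 and 1 in every component. -/
theorem savanna_wave_bounds_grass
    (dW dH dG dB rW rH cW cH eW eH κ1 κ2 s : ℝ)
    (hdW : 0 < dW) (hdH : 0 < dH) (hdG : 0 < dG) (hdB : 0 < dB)
    (hrW : 0 < rW) (hrH : 0 < rH) (hcW : 0 < cW) (hcH : 0 < cH)
    (heW : 0 < eW) (heH : 0 < eH)
    (hκ1 : 0 ≤ κ1) (hκ1' : κ1 < 1) (hκ2 : 0 ≤ κ2) (hκ2' : κ2 < 1)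
    (W H G B : ℝ → ℝ)
    (hWc : ContDiff ℝ 2 W) (hHc : ContDiff ℝ 2 H)
    (hGc : ContDiff ℝ 2 G) (hBc : ContDiff ℝ 2 B)
    (hWpos : ∀ ξ, 0 < W ξ) (hHpos : ∀ ξ, 0 < H ξ)
    (hGpos : ∀ ξ, 0 < G ξ) (hBpos : ∀ ξ, 0 < B ξ)
    (heqW : ∀ ξ, dW * deriv (deriv W) ξ - s * deriv W ξ
        + rW * W ξ * (1 - W ξ - κ1 * H ξ) - cW * B ξ * W ξ = 0)
    (heqH : ∀ ξ, dH * deriv (deriv H) ξ - s * deriv H ξ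
        + rH * H ξ * (1 - H ξ - κ2 * W ξ) - cH * G ξ * H ξ = 0)
    (heqG : ∀ ξ, dG * deriv (deriv G) ξ - s * deriv G ξ + eH * G ξ * (H ξ - G ξ) = 0)
    (heqB : ∀ ξ, dB * deriv (deriv B) ξ - s * deriv B ξ + eW * B ξ * (W ξ - B ξ) = 0)
    (hWbot : Tendsto W atBot (nhds 0)) (hHbot : Tendsto H atBot (nhds (rH / (rH + cH))))
    (hGbot : Tendsto G atBot (nhds (rH / (rH + cH)))) (hBbot : Tendsto B atBot (nhds 0))
    (hWtop : Tendsto W atTop (nhds ((rW * (rH + cH) - rW * rH * κ1) /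
        ((rW + cW) * (rH + cH) - rW * rH * κ1 * κ2))))
    (hHtop : Tendsto H atTop (nhds ((rH * (rW + cW) - rW * rH * κ2) /
        ((rW + cW) * (rH + cH) - rW * rH * κ1 * κ2))))
    (hGtop : Tendsto G atTop (nhds ((rH * (rW + cW) - rW * rH * κ2) /
        ((rW + cW) * (rH + cH) - rW * rH * κ1 * κ2))))
    (hBtop : Tendsto B atTop (nhds ((rW * (rH + cH) - rW * rH * κ1) /
        ((rW + cW) * (rH + cH) - rW * rH * κ1 * κ2)))) :
    ∀ ξ, (0 < W ξ ∧ W ξ < 1) ∧ (0 < H ξ ∧ H ξ < 1) ∧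
         (0 < G ξ ∧ G ξ < 1) ∧ (0 < B ξ ∧ B ξ < 1) := by
  -- positivity of the denominator D
  have hD : 0 < (rW + cW) * (rH + cH) - rW * rH * κ1 * κ2 := by
    have hκ : κ1 * κ2 < 1 := by nlinarith
    nlinarith [mul_pos hrW hrH, mul_pos hcW hrH, mul_pos hrW hcH, mul_pos hcW hcH]
  -- the coexistence values are < 1
  have hWstar : (rW * (rH + cH) - rW * rH * κ1) /
      ((rW + cW) * (rH + cH) - rW * rH * κ1 * κ2) < 1 := by
    rw [div_lt_one hD]
    nlinarith [mul_pos hcW (add_pos hrH hcH),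
      mul_nonneg (mul_nonneg (mul_pos hrW hrH).le hκ1) (by linarith : (0:ℝ) ≤ 1 - κ2)]
  have hHstar : (rH * (rW + cW) - rW * rH * κ2) /
      ((rW + cW) * (rH + cH) - rW * rH * κ1 * κ2) < 1 := by
    rw [div_lt_one hD]
    nlinarith [mul_pos hcH (add_pos hrW hcW),
      mul_nonneg (mul_nonneg (mul_pos hrW hrH).le hκ2) (by linarith : (0:ℝ) ≤ 1 - κ1)]
  have hHbotlt : rH / (rH + cH) < 1 := by
    rw [div_lt_one (by linarith)]; linarith
  -- W < 1
  have hW1 : ∀ ξ, W ξ < 1 := by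
    by_contra hcon
    push_neg at hcon
    obtain ⟨ξ1, hξ1⟩ := hcon
    obtain ⟨x0, hx0⟩ := aux_exists_global_max W hWc.continuous hWbot hWtop
      (by norm_num) hWstar hξ1
    obtain ⟨hd1, hd2⟩ := aux_max_derivs hWc hx0
    have h1 : 1 ≤ W x0 := le_trans hξ1 (hx0 ξ1)
    have heq := heqW x0
    rw [hd1, mul_zero] at heq
    have ht1 : dW * deriv (deriv W) x0 ≤ 0 := mul_nonpos_of_nonneg_of_nonpos hdW.le hd2
    have ht2 : rW * W x0 * (1 - W x0 - κ1 * H x0) ≤ 0 :=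
      mul_nonpos_of_nonneg_of_nonpos (mul_pos hrW (hWpos x0)).le
        (by nlinarith [mul_nonneg hκ1 (hHpos x0).le])
    have ht3 : 0 < cW * B x0 * W x0 := mul_pos (mul_pos hcW (hBpos x0)) (hWpos x0)
    linarith
  -- H < 1
  have hH1 : ∀ ξ, H ξ < 1 := by
    by_contra hcon
    push_neg at hcon
    obtain ⟨ξ1, hξ1⟩ := hcon
    obtain ⟨x0, hx0⟩ := aux_exists_global_max H hHc.continuous hHbot hHtop hHbotlt hHstar hξ1
    obtain ⟨hd1, hd2⟩ := aux_max_derivs hHc hx0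
    have h1 : 1 ≤ H x0 := le_trans hξ1 (hx0 ξ1)
    have heq := heqH x0
    rw [hd1, mul_zero] at heq
    have ht1 : dH * deriv (deriv H) x0 ≤ 0 := mul_nonpos_of_nonneg_of_nonpos hdH.le hd2
    have ht2 : rH * H x0 * (1 - H x0 - κ2 * W x0) ≤ 0 :=
      mul_nonpos_of_nonneg_of_nonpos (mul_pos hrH (hHpos x0)).le
        (by nlinarith [mul_nonneg hκ2 (hWpos x0).le])
    have ht3 : 0 < cH * G x0 * H x0 := mul_pos (mul_pos hcH (hGpos x0)) (hHpos x0)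
    linarith
  -- G < 1 (uses H < 1)
  have hG1 : ∀ ξ, G ξ < 1 := by
    by_contra hcon
    push_neg at hcon
    obtain ⟨ξ1, hξ1⟩ := hcon
    obtain ⟨x0, hx0⟩ := aux_exists_global_max G hGc.continuous hGbot hGtop hHbotlt hHstar hξ1
    obtain ⟨hd1, hd2⟩ := aux_max_derivs hGc hx0
    have h1 : 1 ≤ G x0 := le_trans hξ1 (hx0 ξ1)
    have heq := heqG x0
    rw [hd1, mul_zero] at heq
    have ht1 : dG * deriv (deriv G) x0 ≤ 0 := mul_nonpos_of_nonneg_of_nonpos hdG.le hd2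
    have ht2 : eH * G x0 * (H x0 - G x0) < 0 :=
      mul_neg_of_pos_of_neg (mul_pos heH (hGpos x0)) (by linarith [hH1 x0])
    linarith
  -- B < 1 (uses W < 1)
  have hB1 : ∀ ξ, B ξ < 1 := by
    by_contra hcon
    push_neg at hcon
    obtain ⟨ξ1, hξ1⟩ := hcon
    obtain ⟨x0, hx0⟩ := aux_exists_global_max B hBc.continuous hBbot hBtop
      (by norm_num) hWstar hξ1
    obtain ⟨hd1, hd2⟩ := aux_max_derivs hBc hx0
    have h1 : 1 ≤ B x0 := le_trans hξ1 (hx0 ξ1)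
    have heq := heqB x0
    rw [hd1, mul_zero] at heq
    have ht1 : dB * deriv (deriv B) x0 ≤ 0 := mul_nonpos_of_nonneg_of_nonpos hdB.le hd2
    have ht2 : eW * B x0 * (W x0 - B x0) < 0 :=
      mul_neg_of_pos_of_neg (mul_pos heW (hBpos x0)) (by linarith [hW1 x0])
    linarith
  intro ξ
  exact ⟨⟨hWpos ξ, hW1 ξ⟩, ⟨hHpos ξ, hH1 ξ⟩, ⟨hGpos ξ, hG1 ξ⟩, ⟨hBpos ξ, hB1 ξ⟩⟩
end

section
/- Assume r_W, r_H, c_W, c_H, e_W, e_H > 0 and κ1, κ2 ∈ [0,1). Then D = (r_W + c_W)(r_H + c_H) − r_W r_H κ1 κ2 > 0, the coexistence state (W*, H*, G*, B*) has all four components strictly positive, and it is the unique quadruple (w, h, g, b) of strictly positive real numbers satisfying the steady-state equations r_W w (1 − w − κ1 h) − c_W b w = 0, r_H h (1 − h − κ2 w) − c_H g h = 0, e_H g (h − g) = 0, and e_W b (w − b) = 0. -/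
/-- Positivity and uniqueness of the coexistence steady state of the dimensionless
savanna system. Here `D` is the determinant, `Wstar = B*`, `Hstar = G*`. -/
theorem savanna_coexistence_state_unique
    (rW rH cW cH eW eH κ1 κ2 : ℝ)
    (hrW : 0 < rW) (hrH : 0 < rH) (hcW : 0 < cW) (hcH : 0 < cH)
    (heW : 0 < eW) (heH : 0 < eH)
    (hκ1 : 0 ≤ κ1) (hκ1' : κ1 < 1) (hκ2 : 0 ≤ κ2) (hκ2' : κ2 < 1)
    (D Wstar Hstar : ℝ)
    (hD : D = (rW + cW) * (rH + cH) - rW * rH * κ1 * κ2)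
    (hWstar : Wstar = (rW * (rH + cH) - rW * rH * κ1) / D)
    (hHstar : Hstar = (rH * (rW + cW) - rW * rH * κ2) / D) :
    0 < D ∧
    (0 < Wstar ∧ 0 < Hstar) ∧
    (rW * Wstar * (1 - Wstar - κ1 * Hstar) - cW * Wstar * Wstar = 0 ∧
     rH * Hstar * (1 - Hstar - κ2 * Wstar) - cH * Hstar * Hstar = 0 ∧
     eH * Hstar * (Hstar - Hstar) = 0 ∧
     eW * Wstar * (Wstar - Wstar) = 0) ∧
    (∀ w h g b : ℝ, 0 < w → 0 < h → 0 < g → 0 < b →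
      rW * w * (1 - w - κ1 * h) - cW * b * w = 0 →
      rH * h * (1 - h - κ2 * w) - cH * g * h = 0 →
      eH * g * (h - g) = 0 →
      eW * b * (w - b) = 0 →
      w = Wstar ∧ h = Hstar ∧ g = Hstar ∧ b = Wstar) := by
  have hκκ : κ1 * κ2 < 1 := by nlinarith
  have hDpos : 0 < D := by
    rw [hD]
    nlinarith [mul_pos hrW hrH, mul_pos hrW hcH, mul_pos hcW hrH, mul_pos hcW hcH]
  have hDne : D ≠ 0 := ne_of_gt hDpos
  have hWnum : 0 < rW * (rH + cH) - rW * rH * κ1 := by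
    nlinarith [mul_pos hrW hrH, mul_pos hrW hcH]
  have hHnum : 0 < rH * (rW + cW) - rW * rH * κ2 := by
    nlinarith [mul_pos hrW hrH, mul_pos hrH hcW]
  have hWpos : 0 < Wstar := hWstar ▸ div_pos hWnum hDpos
  have hHpos : 0 < Hstar := hHstar ▸ div_pos hHnum hDpos
  refine ⟨hDpos, ⟨hWpos, hHpos⟩, ⟨?_, ?_, by ring, by ring⟩, ?_⟩
  · rw [hWstar, hHstar]; field_simp; rw [hD]; ring
  · rw [hWstar, hHstar]; field_simp; rw [hD]; ring
  · intro w h g b hw hh hg hb e1 e2 e3 e4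
    have hgh : g = h := by
      rcases mul_eq_zero.1 e3 with h' | h'
      · rcases mul_eq_zero.1 h' with h'' | h''
        · exact absurd h'' (ne_of_gt heH)
        · exact absurd h'' (ne_of_gt hg)
      · linarith [sub_eq_zero.1 h']
    have hbw : b = w := by
      rcases mul_eq_zero.1 e4 with h' | h'
      · rcases mul_eq_zero.1 h' with h'' | h''
        · exact absurd h'' (ne_of_gt heW)
        · exact absurd h'' (ne_of_gt hb)
      · linarith [sub_eq_zero.1 h']
    rw [hbw] at e1
    rw [hgh] at e2
    have l1 : (rW + cW) * w + rW * κ1 * h = rW := by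
      have h0 : w * ((rW + cW) * w + rW * κ1 * h - rW) = 0 := by linear_combination -e1
      rcases mul_eq_zero.1 h0 with h' | h'
      · exact absurd h' (ne_of_gt hw)
      · linarith
    have l2 : rH * κ2 * w + (rH + cH) * h = rH := by
      have h0 : h * (rH * κ2 * w + (rH + cH) * h - rH) = 0 := by linear_combination -e2
      rcases mul_eq_zero.1 h0 with h' | h'
      · exact absurd h' (ne_of_gt hh)
      · linarith
    have hwD : w * D = rW * (rH + cH) - rW * rH * κ1 := by
      rw [hD]; linear_combination (rH + cH) * l1 - rW * κ1 * l2
    have hhD : h * D = rH * (rW + cW) - rW * rH * κ2 := by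
      rw [hD]; linear_combination (rW + cW) * l2 - rH * κ2 * l1
    have hwW : w = Wstar := by
      rw [hWstar, ← hwD, mul_div_cancel_right₀ _ hDne]
    have hhH : h = Hstar := by
      rw [hHstar, ← hhD, mul_div_cancel_right₀ _ hDne]
    exact ⟨hwW, hhH, hgh.trans hhH, hbw.trans hwW⟩
end

section
/- Let d_W, d_H, d_B, r_W, r_H, c_W > 0, κ1 ≥ 0, and let s > max{2√(d_W r_W), 2√(d_H r_H)}. Set λ_W = (s − √(s² − 4 d_W r_W))/(2 d_W), η_W = (s + √(s² − 4 d_W r_W))/(2 d_W), λ_H = (s − √(s² − 4 d_H r_H))/(2 d_H), λ_B = s/d_B. Let δ be any real number with 1 < δ < min{2, η_W/λ_W, (λ_W + λ_B)/λ_W, (λ_W + λ_H)/λ_W}, so that d_W (δ λ_W)² − s (δ λ_W) + r_W < 0, and let ω > (r_W + r_W κ1 + c_W)/(−(d_W (δ λ_W)² − s (δ λ_W) + r_W)). Define W̲(ξ) = e^{λ_W ξ} − ω e^{δ λ_W ξ}. Then for every ξ ≤ 0 with W̲(ξ) ≥ 0, one has d_W W̲''(ξ) − s W̲'(ξ) +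 r_W W̲(ξ)(1 − W̲(ξ) − κ1 e^{λ_H ξ}) − c_W e^{λ_B ξ} W̲(ξ) ≥ 0. -/
open Real

set_option maxHeartbeats 1000000 in
/-- The lower-solution inequality for the wood equation: wherever the candidate
lower solution `W̲(ξ) = e^{λ_W ξ} − ω e^{δ λ_W ξ}` is nonnegative on `(−∞, 0]`, it
satisfies the differential inequality with upper barriers `e^{λ_H ξ}` and `e^{λ_B ξ}`. -/
theorem wood_lower_solution_inequality
    (dW dH dB rW rH cW κ1 s lamW etaW lamH lamB δ ω : ℝ)
    (hdW : 0 < dW) (hdH : 0 < dH) (hdB : 0 < dB)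
    (hrW : 0 < rW) (hrH : 0 < rH) (hcW : 0 < cW) (hκ1 : 0 ≤ κ1)
    (hs : max (2 * Real.sqrt (dW * rW)) (2 * Real.sqrt (dH * rH)) < s)
    (hlamW : lamW = (s - Real.sqrt (s ^ 2 - 4 * dW * rW)) / (2 * dW))
    (hetaW : etaW = (s + Real.sqrt (s ^ 2 - 4 * dW * rW)) / (2 * dW))
    (hlamH : lamH = (s - Real.sqrt (s ^ 2 - 4 * dH * rH)) / (2 * dH))
    (hlamB : lamB = s / dB)
    (hδ1 : 1 < δ)
    (hδ2 : δ < min (min 2 (etaW / lamW)) (min ((lamW + lamB) / lamW) ((lamW + lamH) / lamW)))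
    (hneg : dW * (δ * lamW) ^ 2 - s * (δ * lamW) + rW < 0)
    (hω : ω > (rW + rW * κ1 + cW) / (-(dW * (δ * lamW) ^ 2 - s * (δ * lamW) + rW))) :
    ∀ ξ ≤ (0 : ℝ),
      Real.exp (lamW * ξ) - ω * Real.exp (δ * lamW * ξ) ≥ 0 →
      dW * deriv (deriv (fun x => Real.exp (lamW * x) - ω * Real.exp (δ * lamW * x))) ξ
        - s * deriv (fun x => Real.exp (lamW * x) - ω * Real.exp (δ * lamW * x)) ξ
        + rW * (Real.exp (lamW * ξ) - ω * Real.exp (δ * lamW * ξ)) *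
            (1 - (Real.exp (lamW * ξ) - ω * Real.exp (δ * lamW * ξ)) - κ1 * Real.exp (lamH * ξ))
        - cW * Real.exp (lamB * ξ) * (Real.exp (lamW * ξ) - ω * Real.exp (δ * lamW * ξ)) ≥ 0 := by
  intro ξ hξ hWpos
  have hs1 : 2 * Real.sqrt (dW * rW) < s := lt_of_le_of_lt (le_max_left _ _) hs
  have hs2 : 2 * Real.sqrt (dH * rH) < s := lt_of_le_of_lt (le_max_right _ _) hs
  have hsqW : Real.sqrt (dW * rW) ^ 2 = dW * rW := Real.sq_sqrt (by positivity)
  have hsqH : Real.sqrt (dH * rH) ^ 2 = dH * rH := Real.sq_sqrt (by positivity)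
  have hspos : 0 < s := lt_of_le_of_lt (by positivity) hs1
  have hgeW : (0:ℝ) ≤ s ^ 2 - 4 * dW * rW := by nlinarith [Real.sqrt_nonneg (dW * rW)]
  have hgeH : (0:ℝ) ≤ s ^ 2 - 4 * dH * rH := by nlinarith [Real.sqrt_nonneg (dH * rH)]
  set qW := Real.sqrt (s ^ 2 - 4 * dW * rW) with hqWdef
  set qH := Real.sqrt (s ^ 2 - 4 * dH * rH) with hqHdef
  have hqW2 : qW ^ 2 = s ^ 2 - 4 * dW * rW := Real.sq_sqrt hgeW
  have hqWnn : 0 ≤ qW := Real.sqrt_nonneg _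
  have hqHnn : 0 ≤ qH := Real.sqrt_nonneg _
  have hqWlt : qW < s := by
    rw [hqWdef]; exact (Real.sqrt_lt' hspos).mpr (by linarith [mul_pos hdW hrW])
  have hqHlt : qH < s := by
    rw [hqHdef]; exact (Real.sqrt_lt' hspos).mpr (by linarith [mul_pos hdH hrH])
  have hlamWpos : 0 < lamW := by
    rw [hlamW]; exact div_pos (by linarith) (by linarith)
  have hlamHpos : 0 < lamH := by
    rw [hlamH]; exact div_pos (by linarith) (by linarith)
  have hlamBpos : 0 < lamB := by rw [hlamB]; positivity
  -- lamW is a root of the characteristic polynomial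
  have hlin : lamW * (2 * dW) = s - qW := by
    rw [hlamW]; field_simp
  have h4 : 4 * dW * (dW * lamW ^ 2 - s * lamW + rW) = 0 := by
    linear_combination (2 * dW * lamW - s - qW) * hlin + hqW2
  have hroot : dW * lamW ^ 2 - s * lamW + rW = 0 :=
    (mul_eq_zero.mp h4).resolve_left (by positivity)
  -- consequences of hδ2
  have hδ2' : δ < 2 := lt_of_lt_of_le hδ2 (le_trans (min_le_left _ _) (min_le_left _ _))
  have hδB : δ * lamW < lamW + lamB := by
    have h := lt_of_lt_of_le hδ2 (le_trans (min_le_right _ _) (min_le_left _ _))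
    rw [lt_div_iff₀ hlamWpos] at h; linarith
  have hδH : δ * lamW < lamW + lamH := by
    have h := lt_of_lt_of_le hδ2 (le_trans (min_le_right _ _) (min_le_right _ _))
    rw [lt_div_iff₀ hlamWpos] at h; linarith
  have hδ2lam : δ * lamW < 2 * lamW := mul_lt_mul_of_pos_right hδ2' hlamWpos
  -- omega bound
  have hnegpos : 0 < -(dW * (δ * lamW) ^ 2 - s * (δ * lamW) + rW) := by linarith
  have hωkey : rW + rW * κ1 + cW < ω * (-(dW * (δ * lamW) ^ 2 - s * (δ * lamW) + rW)) := by
    rw [gt_iff_lt, div_lt_iff₀ hnegpos] at hω; linarith [hω]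
  have hω0 : 0 < ω := lt_of_le_of_lt (le_of_lt (div_pos (by nlinarith [mul_nonneg hrW.le hκ1]) hnegpos)) hω
  -- derivatives
  have hd : ∀ c : ℝ, ∀ x : ℝ, HasDerivAt (fun y => Real.exp (c * y)) (c * Real.exp (c * x)) x := by
    intro c x
    have h := (Real.hasDerivAt_exp (c * x)).comp x ((hasDerivAt_id x).const_mul c)
    simpa [mul_comm, Function.comp_def] using h
  have hderiv1 : deriv (fun x => Real.exp (lamW * x) - ω * Real.exp (δ * lamW * x))
      = fun x => lamW * Real.exp (lamW * x) - ω * (δ * lamW * Real.exp (δ * lamW * x)) := by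
    funext x
    exact ((hd lamW x).sub ((hd (δ * lamW) x).const_mul ω)).deriv
  have hderiv2 : deriv (deriv (fun x => Real.exp (lamW * x) - ω * Real.exp (δ * lamW * x))) ξ
      = lamW * (lamW * Real.exp (lamW * ξ))
        - ω * ((δ * lamW) * ((δ * lamW) * Real.exp (δ * lamW * ξ))) := by
    rw [hderiv1]
    exact (((hd lamW ξ).const_mul lamW).sub
      (((hd (δ * lamW) ξ).const_mul (δ * lamW)).const_mul ω)).deriv
  rw [hderiv2, hderiv1]
  set A := Real.exp (lamW * ξ) with hA
  set B := Real.exp (δ * lamW * ξ) with hB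
  set H := Real.exp (lamH * ξ) with hH
  set Bb := Real.exp (lamB * ξ) with hBb
  have hApos : 0 < A := Real.exp_pos _
  have hBpos : 0 < B := Real.exp_pos _
  have hHpos : 0 < H := Real.exp_pos _
  have hBbpos : 0 < Bb := Real.exp_pos _
  have hnegξ : 0 ≤ -ξ := by linarith
  have hAA : A * A ≤ B := by
    rw [hA, hB, ← Real.exp_add]
    refine Real.exp_le_exp.mpr ?_
    have h1 := mul_nonneg (by linarith : (0:ℝ) ≤ 2 * lamW - δ * lamW) hnegξ
    linarith [h1]
  have hAH : A * H ≤ B := by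
    rw [hA, hB, hH, ← Real.exp_add]
    refine Real.exp_le_exp.mpr ?_
    have h1 := mul_nonneg (by linarith : (0:ℝ) ≤ lamW + lamH - δ * lamW) hnegξ
    linarith [h1]
  have hAB : A * Bb ≤ B := by
    rw [hA, hB, hBb, ← Real.exp_add]
    refine Real.exp_le_exp.mpr ?_
    have h1 := mul_nonneg (by linarith : (0:ℝ) ≤ lamW + lamB - δ * lamW) hnegξ
    linarith [h1]
  set W := A - ω * B with hWdef
  have hW0 : 0 ≤ W := hWpos
  have hWA : W ≤ A := by
    have h := mul_pos hω0 hBpos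
    rw [hWdef]; linarith
  have hW2 : W * W ≤ B :=
    le_trans (mul_le_mul hWA hWA hW0 hApos.le) hAA
  have hWH : W * H ≤ B :=
    le_trans (mul_le_mul_of_nonneg_right hWA hHpos.le) hAH
  have hWB : W * Bb ≤ B :=
    le_trans (mul_le_mul_of_nonneg_right hWA hBbpos.le) hAB
  have hkey : dW * (lamW * (lamW * A) - ω * ((δ * lamW) * ((δ * lamW) * B)))
      - s * (lamW * A - ω * (δ * lamW * B))
      + rW * W * (1 - W - κ1 * H) - cW * Bb * W
      = (dW * lamW ^ 2 - s * lamW + rW) * A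
        + (ω * (-(dW * (δ * lamW) ^ 2 - s * (δ * lamW) + rW))) * B
        - rW * (W * W) - rW * κ1 * (W * H) - cW * (W * Bb) := by
    rw [hWdef]; ring
  rw [hkey, hroot]
  have f1 : rW * (W * W) ≤ rW * B := mul_le_mul_of_nonneg_left hW2 hrW.le
  have f2 : rW * κ1 * (W * H) ≤ rW * κ1 * B :=
    mul_le_mul_of_nonneg_left hWH (mul_nonneg hrW.le hκ1)
  have f3 : cW * (W * Bb) ≤ cW * B := mul_le_mul_of_nonneg_left hWB hcW.le
  have f4 : (rW + rW * κ1 + cW) * B < ω * (-(dW * (δ * lamW) ^ 2 - s * (δ * lamW) + rW)) * B :=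
    mul_lt_mul_of_pos_right hωkey hBpos
  linarith [f1, f2, f3, f4]
end

section
/- Let d_B, s, e_W, β, b, ϖ > 0 and ξ_B ∈ ℝ, and assume −2 d_B β − s²/(4 d_B) + e_W(ϖ − b) ≥ 0. Define B̲(ξ) = b e^{−β(ξ − ξ_B)²}. Then for every ξ ≤ ξ_B, d_B B̲''(ξ) − s B̲'(ξ) + e_W B̲(ξ)(ϖ − B̲(ξ)) ≥ 0. -/
open Real

lemma gauss_hasDeriv (b β ξB : ℝ) (x : ℝ) :
    HasDerivAt (fun x => b * Real.exp (-β * (x - ξB) ^ 2))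
      ((-2 * β * (x - ξB)) * (b * Real.exp (-β * (x - ξB) ^ 2))) x := by
  have h1 : HasDerivAt (fun x : ℝ => -β * (x - ξB) ^ 2)
      (-β * (2 * (x - ξB))) x := by
    have := (((hasDerivAt_id x).sub_const ξB).pow 2).const_mul (-β)
    simpa using this
  have := (h1.exp).const_mul b
  exact this.congr_deriv (by ring)

lemma gauss_deriv (b β ξB : ℝ) :
    deriv (fun x => b * Real.exp (-β * (x - ξB) ^ 2))
      = fun x => (-2 * β * (x - ξB)) * (b * Real.exp (-β * (x - ξB) ^ 2)) := by
  funext x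
  exact (gauss_hasDeriv b β ξB x).deriv

lemma gauss_deriv2 (b β ξB : ℝ) (x : ℝ) :
    deriv (deriv (fun x => b * Real.exp (-β * (x - ξB) ^ 2))) x
      = (4 * β ^ 2 * (x - ξB) ^ 2 - 2 * β) * (b * Real.exp (-β * (x - ξB) ^ 2)) := by
  rw [gauss_deriv]
  have h1 : HasDerivAt (fun x : ℝ => -2 * β * (x - ξB)) (-2 * β) x := by
    simpa using ((hasDerivAt_id x).sub_const ξB).const_mul (-2 * β)
  have h2 := h1.mul (gauss_hasDeriv b β ξB x)
  have := h2.deriv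
  rw [show (fun x => -2 * β * (x - ξB) * (b * rexp (-β * (x - ξB) ^ 2))) = ((fun x => -2 * β * (x - ξB)) * fun x => b * rexp (-β * (x - ξB) ^ 2)) from rfl, this]
  ring

/-- The Gaussian lower barrier for the browser equation: if
`−2 dB β − s²/(4 dB) + eW (ϖ − b) ≥ 0`, then `B̲(ξ) = b e^{−β(ξ−ξB)²}`
satisfies the differential inequality on `(−∞, ξB]` with wood biomass at least `ϖ`. -/
theorem browser_gaussian_lower_solution
    (dB s eW β b piW ξB : ℝ)
    (hdB : 0 < dB) (hs : 0 < s) (heW : 0 < eW) (hβ : 0 < β) (hb : 0 < b)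
    (hpiW : 0 < piW)
    (hcond : -2 * dB * β - s ^ 2 / (4 * dB) + eW * (piW - b) ≥ 0) :
    ∀ ξ ≤ ξB,
      dB * deriv (deriv (fun x => b * Real.exp (-β * (x - ξB) ^ 2))) ξ
        - s * deriv (fun x => b * Real.exp (-β * (x - ξB) ^ 2)) ξ
        + eW * (b * Real.exp (-β * (ξ - ξB) ^ 2)) *
            (piW - b * Real.exp (-β * (ξ - ξB) ^ 2)) ≥ 0 := by
  intro ξ hξ
  rw [gauss_deriv2, gauss_deriv]
  beta_reduce
  set u := ξ - ξB with hu
  set E := Real.exp (-β * u ^ 2) with hE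
  have hE0' : E = Real.exp (-β * u ^ 2) := hE
  have hE0 : 0 < E := hE0' ▸ Real.exp_pos _
  clear_value u E
  have hE1 : E ≤ 1 := by
    rw [hE0']
    apply Real.exp_le_one_iff.mpr
    nlinarith [sq_nonneg u]
  have hu0 : u ≤ 0 := by simp [hu]; linarith
  -- bracket ≥ 0
  have hB : b * E ≤ b := by nlinarith
  have key : dB * (4 * β ^ 2 * u ^ 2 - 2 * β) + 2 * s * β * u + eW * (piW - b * E) ≥ 0 := by
    have hsq : (0:ℝ) ≤ (4 * β * u * dB + s) ^ 2 / (4 * dB) :=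
      div_nonneg (sq_nonneg _) (by linarith)
    have hexp : (4 * β * u * dB + s) ^ 2 / (4 * dB)
        = 4 * β ^ 2 * u ^ 2 * dB + 2 * s * β * u + s ^ 2 / (4 * dB) := by
      field_simp
      ring
    rw [hexp] at hsq
    have hW : 0 ≤ eW * (b - b * E) := mul_nonneg heW.le (by linarith)
    nlinarith [hW, hsq, hcond, mul_pos heW hpiW]
  have hBE : 0 < b * E := by positivity
  calc dB * ((4 * β ^ 2 * u ^ 2 - 2 * β) * (b * E))
        - s * (-2 * β * u * (b * E)) + eW * (b * E) * (piW - b * E)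
      = (b * E) * (dB * (4 * β ^ 2 * u ^ 2 - 2 * β) + 2 * s * β * u + eW * (piW - b * E)) := by
        ring
    _ ≥ 0 := by positivity
end

section
/- Assume all parameters d_W, d_H, d_G, d_B, r_W, r_H, c_W, c_H, e_W, e_H are positive, κ1, κ2 ≥ 0 with 1 − κ1 − c_W/r_W > 0 and 1 − κ2 − c_H/r_H > 0, and s ∈ ℝ. Let (W, H, G, B) be a twice continuously differentiable solution of the traveling wave system (TW) on ℝ such that 0 < W(ξ) ≤ 1, 0 < H(ξ) ≤ 1, 0 < G(ξ) ≤ 1, 0 < B(ξ) ≤ 1 for all ξ ∈ ℝ, and such that the limit inferior as ξ → +∞ of each of W, H, G, B is strictly positive. Then (W(ξ), H(ξ), G(ξ), B(ξ)) → (W*, H*, G*, B*) as ξ → +∞. -/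
open Real Filter

open Topology

section SavannaAux

lemma ctd2 {u : ℝ → ℝ} (hu : ContDiff ℝ 2 u) :
    Differentiable ℝ u ∧ Differentiable ℝ (deriv u) ∧ Continuous (deriv (deriv u)) := by
  have h2 : (2 : WithTop ℕ∞) = 1 + 1 := by norm_num
  rw [h2, contDiff_succ_iff_deriv] at hu
  have h1 := contDiff_one_iff_deriv.mp hu.2.2
  exact ⟨hu.1, h1.1, h1.2⟩

lemma deriv2_nonneg_of_isLocalMin {v : ℝ → ℝ} {x0 : ℝ}
    (hv1 : Differentiable ℝ v) (hv2 : Differentiable ℝ (deriv v))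
    (h : IsLocalMin v x0) : 0 ≤ deriv (deriv v) x0 := by
  by_contra hneg
  push_neg at hneg
  have h0 : deriv v x0 = 0 := h.deriv_eq_zero
  have hd : HasDerivAt (deriv v) (deriv (deriv v) x0) x0 := (hv2 x0).hasDerivAt
  rw [hasDerivAt_iff_tendsto_slope] at hd
  have hlt : ∀ᶠ y in 𝓝[≠] x0, slope (deriv v) x0 y < 0 :=
    hd.eventually (eventually_lt_nhds hneg)
  have hlt' : ∀ᶠ y in 𝓝[>] x0, slope (deriv v) x0 y < 0 :=
    nhdsWithin_mono x0 (fun y hy => ne_of_gt hy) hlt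
  obtain ⟨c, hc, hcy⟩ := (nhdsGT_basis x0).eventually_iff.mp hlt'
  have hderivneg : ∀ y ∈ Set.Ioo x0 c, deriv v y < 0 := by
    intro y hy
    have hs := hcy ⟨hy.1, hy.2⟩
    have heq : slope (deriv v) x0 y = deriv v y / (y - x0) := by
      rw [slope_def_field, h0]; ring
    rw [heq] at hs
    have hy0 : 0 < y - x0 := by linarith [hy.1]
    rcases (div_neg_iff).mp hs with ⟨_, h2⟩ | ⟨h1, _⟩
    · linarith
    · exact h1
  set c' := (x0 + c) / 2 with hc'
  have hx0c' : x0 < c' := by simp only [hc']; linarith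
  have hc'c : c' < c := by simp only [hc']; linarith
  have hanti : StrictAntiOn v (Set.Icc x0 c') := by
    apply strictAntiOn_of_deriv_neg (convex_Icc _ _) (hv1.continuous.continuousOn)
    intro y hy
    rw [interior_Icc] at hy
    exact hderivneg y ⟨hy.1, lt_trans hy.2 hc'c⟩
  obtain ⟨δ, hδ, hmin⟩ :=
    Metric.eventually_nhds_iff.mp (h : ∀ᶠ x in 𝓝 x0, v x0 ≤ v x)
  set y := x0 + min (δ / 2) (c' - x0) with hy
  have hmpos : 0 < min (δ / 2) (c' - x0) := lt_min (by linarith) (by linarith)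
  have hyx0 : x0 < y := by simp only [hy]; linarith
  have hy1 : y ≤ c' := by
    have := min_le_right (δ / 2) (c' - x0); simp only [hy]; linarith
  have hlt2 : v y < v x0 :=
    hanti (Set.left_mem_Icc.mpr (by linarith)) ⟨hyx0.le, hy1⟩ hyx0
  have hge : v x0 ≤ v y := by
    apply hmin
    have : dist y x0 = |min (δ / 2) (c' - x0)| := by
      simp [hy, Real.dist_eq, abs_sub_comm]
    rw [this, abs_of_pos hmpos]
    calc min (δ / 2) (c' - x0) ≤ δ / 2 := min_le_left _ _
    _ < δ := by linarith
  linarith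

lemma exists_good_point {u : ℝ → ℝ} (hu : ContDiff ℝ 2 u)
    (hb : ∀ x, |u x| ≤ 1) {m ε : ℝ} (R : ℝ) (hε : 0 < ε) (hε1 : ε ≤ 1) (hm : m ≤ 1)
    (hlow : ∀ᶠ ξ in atTop, m - ε < u ξ)
    (hfreq : ∀ R', ∃ ξ ≥ R', u ξ < m + ε) :
    ∃ ξ ≥ R, u ξ < m + ε ∧ |deriv u ξ| ≤ 3 * Real.sqrt ε ∧ -ε ≤ deriv (deriv u) ξ := by
  obtain ⟨hd1, hd2, hd3⟩ := ctd2 hu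
  obtain ⟨T0, hT0⟩ := eventually_atTop.mp hlow
  set T := max R T0 with hT
  have hTlow : ∀ ξ ≥ T, m - ε < u ξ := fun ξ hξ => hT0 ξ (le_trans (le_max_right _ _) hξ)
  set L := Real.sqrt (8 / ε) with hL
  have hL2 : L ^ 2 = 8 / ε := Real.sq_sqrt (by positivity)
  have hLpos : 0 < L := Real.sqrt_pos.mpr (by positivity)
  obtain ⟨ξ0, hξ0T, hξ0u⟩ := hfreq (T + L)
  set A := ξ0 + L with hA
  set v := fun x => u x + ε / 2 * (x - ξ0) ^ 2 with hv
  -- derivative formulas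
  have hdv : deriv v = fun x => deriv u x + ε * (x - ξ0) := by
    funext x
    have h1 : HasDerivAt (fun x : ℝ => ε / 2 * (x - ξ0) ^ 2) (ε / 2 * (2 * (x - ξ0))) x := by
      have := ((hasDerivAt_id x).sub_const ξ0).pow 2
      simpa using (this.const_mul (ε / 2))
    have h2 : HasDerivAt v (deriv u x + ε / 2 * (2 * (x - ξ0))) x :=
      ((hd1 x).hasDerivAt).add h1
    rw [h2.deriv]; ring
  have hdv2 : ∀ x, deriv (deriv v) x = deriv (deriv u) x + ε := by
    intro x
    rw [hdv]
    have h1 : HasDerivAt (fun x : ℝ => ε * (x - ξ0)) (ε * 1) x := by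
      simpa using ((hasDerivAt_id x).sub_const ξ0).const_mul ε
    have h2 : HasDerivAt (fun x => deriv u x + ε * (x - ξ0)) (deriv (deriv u) x + ε * 1) x :=
      ((hd2 x).hasDerivAt).add h1
    rw [h2.deriv]; ring
  have hvdiff : Differentiable ℝ v :=
    hd1.add (((differentiable_id.sub_const ξ0).pow 2).const_mul (ε/2))
  have hvd2 : Differentiable ℝ (deriv v) := by
    rw [hdv]
    exact hd2.add ((differentiable_id.sub_const ξ0).const_mul ε)
  -- min on [T, A]
  have hTA : T ≤ A := by
    have : T + L ≤ ξ0 := hξ0T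
    simp only [hA]; linarith
  obtain ⟨xs, hxsmem, hxsmin⟩ := isCompact_Icc.exists_isMinOn (Set.nonempty_Icc.mpr hTA)
    (hvdiff.continuous.continuousOn)
  have hξ0mem : ξ0 ∈ Set.Icc T A := ⟨by linarith [hξ0T, hLpos], by simp [hA]; linarith [hLpos]⟩
  have hvξ0 : v ξ0 = u ξ0 := by simp [hv]
  have hvxsle : v xs ≤ u ξ0 := by rw [← hvξ0]; exact hxsmin hξ0mem
  have hmub : m + ε ≤ 2 := by linarith
  -- v T > m + ε
  have hvT : m + ε < v T := by
    have h1 : m - ε < u T := hTlow T le_rfl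
    have h2 : L ≤ ξ0 - T := by linarith [hξ0T]
    have h3 : L ^ 2 ≤ (T - ξ0) ^ 2 := by nlinarith [hLpos]
    have h4 : ε / 2 * (T - ξ0) ^ 2 ≥ ε / 2 * (8 / ε) := by
      apply mul_le_mul_of_nonneg_left _ (by positivity)
      rw [← hL2]; exact h3
    have h5 : ε / 2 * (8 / ε) = 4 := by field_simp; ring
    simp only [hv]; nlinarith
  have hvA : m + ε < v A := by
    have h1 : -1 ≤ u A := (abs_le.mp (hb A)).1
    have h4 : ε / 2 * (A - ξ0) ^ 2 = 4 := by
      have : A - ξ0 = L := by simp [hA]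
      rw [this, hL2]; field_simp; ring
    simp only [hv]; nlinarith
  -- xs interior
  have hxslt : v xs < m + ε := lt_of_le_of_lt hvxsle hξ0u
  have hxsIoo : xs ∈ Set.Ioo T A := by
    rcases hxsmem.1.lt_or_eq with h | h
    · rcases hxsmem.2.lt_or_eq with h' | h'
      · exact ⟨h, h'⟩
      · exfalso; rw [h'] at hxslt; linarith
    · exfalso; rw [h] at hvT; linarith
  have hlocal : IsLocalMin v xs :=
    hxsmin.isLocalMin (Icc_mem_nhds hxsIoo.1 hxsIoo.2)
  -- conclusions
  refine ⟨xs, le_trans (le_max_left _ _) hxsmem.1, ?_, ?_, ?_⟩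
  · have : u xs ≤ v xs := by simp only [hv]; nlinarith [sq_nonneg (xs - ξ0)]
    linarith
  · -- deriv u xs = -ε * (xs - ξ0), with bound
    have hz : deriv v xs = 0 := hlocal.deriv_eq_zero
    rw [hdv] at hz
    simp only at hz
    have hder : deriv u xs = -(ε * (xs - ξ0)) := by linarith
    have hsq : (xs - ξ0) ^ 2 ≤ 9 / ε := by
      have h1 : -1 ≤ u xs := (abs_le.mp (hb xs)).1
      have h2 : u xs + ε / 2 * (xs - ξ0) ^ 2 < m + ε := by
        simpa [hv] using hxslt
      have key : ε * (xs - ξ0) ^ 2 < 6 := by linarith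
      rw [le_div_iff₀ hε]
      nlinarith [sq_nonneg (xs - ξ0)]
    have hb2 : (deriv u xs) ^ 2 ≤ 9 * ε := by
      rw [hder]
      have : (-(ε * (xs - ξ0))) ^ 2 = ε ^ 2 * (xs - ξ0) ^ 2 := by ring
      rw [this]
      calc ε ^ 2 * (xs - ξ0) ^ 2 ≤ ε ^ 2 * (9 / ε) := by
            apply mul_le_mul_of_nonneg_left hsq (by positivity)
      _ = 9 * ε := by field_simp
    have h3s : (3 * Real.sqrt ε) ^ 2 = 9 * ε := by
      rw [mul_pow, Real.sq_sqrt hε.le]; ring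
    have : |deriv u xs| ^ 2 ≤ (3 * Real.sqrt ε) ^ 2 := by rw [h3s, sq_abs]; exact hb2
    have habs : |deriv u xs| = Real.sqrt ((deriv u xs) ^ 2) := (Real.sqrt_sq_eq_abs _).symm
    rw [habs]
    calc Real.sqrt ((deriv u xs) ^ 2) ≤ Real.sqrt (9 * ε) := Real.sqrt_le_sqrt hb2
    _ = 3 * Real.sqrt ε := by
        rw [show (9 : ℝ) * ε = 3 ^ 2 * ε by norm_num, Real.sqrt_mul (by positivity),
          Real.sqrt_sq (by norm_num)]
  · have h2 := deriv2_nonneg_of_isLocalMin hvdiff hvd2 hlocal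
    rw [hdv2] at h2
    linarith

lemma bdd_ge {u : ℝ → ℝ} (hb : ∀ x, |u x| ≤ 1) : IsBoundedUnder (· ≥ ·) atTop u :=
  isBoundedUnder_of ⟨-1, fun x => (abs_le.mp (hb x)).1⟩

lemma bdd_le {u : ℝ → ℝ} (hb : ∀ x, |u x| ≤ 1) : IsBoundedUnder (· ≤ ·) atTop u :=
  isBoundedUnder_of ⟨1, fun x => (abs_le.mp (hb x)).2⟩

lemma key_freq {u Φ : ℝ → ℝ} {d s : ℝ} (hd : 0 < d) (hu : ContDiff ℝ 2 u)
    (hb : ∀ x, |u x| ≤ 1)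
    (heq : ∀ ξ, d * deriv (deriv u) ξ - s * deriv u ξ + Φ ξ = 0)
    {δ : ℝ} (hδ : 0 < δ) :
    ∀ R, ∃ ξ ≥ R, u ξ < liminf u atTop + δ ∧ Φ ξ ≤ δ := by
  intro R
  set m := liminf u atTop with hmdef
  have hmle : m ≤ 1 :=
    liminf_le_of_frequently_le (Frequently.of_forall fun x => (abs_le.mp (hb x)).2) (bdd_ge hb)
  set C := 3 * |s| + d with hC
  have hCpos : 0 < C := by positivity
  set ε := min (min 1 δ) ((δ / C) ^ 2) with hε
  have hεpos : 0 < ε := by positivity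
  have hε1 : ε ≤ 1 := le_trans (min_le_left _ _) (min_le_left _ _)
  have hεδ : ε ≤ δ := le_trans (min_le_left _ _) (min_le_right _ _)
  have hsqrt : Real.sqrt ε ≤ δ / C := by
    calc Real.sqrt ε ≤ Real.sqrt ((δ / C) ^ 2) :=
          Real.sqrt_le_sqrt (min_le_right _ _)
    _ = δ / C := Real.sqrt_sq (by positivity)
  have hεsqrt : ε ≤ Real.sqrt ε := by
    nlinarith [Real.sq_sqrt hεpos.le, Real.sqrt_nonneg ε, Real.sqrt_le_sqrt hε1,
      Real.sqrt_one]
  have hlow : ∀ᶠ ξ in atTop, m - ε < u ξ :=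
    eventually_lt_of_lt_liminf (by linarith) (bdd_ge hb)
  have hfreq : ∀ R', ∃ ξ ≥ R', u ξ < m + ε := by
    intro R'
    have : ∃ᶠ ξ in atTop, u ξ < m + ε :=
      frequently_lt_of_liminf_lt ((bdd_le hb).isCoboundedUnder_ge) (by linarith)
    exact (frequently_atTop.mp this) R'
  obtain ⟨ξ, hξR, hξu, hξd1, hξd2⟩ := exists_good_point hu hb R hεpos hε1 hmle hlow hfreq
  refine ⟨ξ, hξR, by linarith, ?_⟩
  have hΦ : Φ ξ = s * deriv u ξ - d * deriv (deriv u) ξ := by linarith [heq ξ]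
  have h1 : s * deriv u ξ ≤ |s| * (3 * Real.sqrt ε) := by
    calc s * deriv u ξ ≤ |s * deriv u ξ| := le_abs_self _
    _ = |s| * |deriv u ξ| := abs_mul _ _
    _ ≤ |s| * (3 * Real.sqrt ε) := mul_le_mul_of_nonneg_left hξd1 (abs_nonneg s)
  have h2 : -(d * deriv (deriv u) ξ) ≤ d * ε := by nlinarith
  have h3 : Φ ξ ≤ 3 * |s| * Real.sqrt ε + d * ε := by rw [hΦ]; linarith
  have h4 : d * ε ≤ d * Real.sqrt ε := mul_le_mul_of_nonneg_left hεsqrt hd.le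
  have h5 : C * Real.sqrt ε ≤ C * (δ / C) := mul_le_mul_of_nonneg_left hsqrt hCpos.le
  have h6 : C * (δ / C) = δ := by field_simp
  calc Φ ξ ≤ C * Real.sqrt ε := by rw [hC]; linarith
  _ ≤ δ := by rw [← h6]; exact h5

/-- min-side inequality -/
lemma liminf_ineq {u Θ : ℝ → ℝ} {d s r c : ℝ} (hd : 0 < d) (hr : 0 < r)
    (hu : ContDiff ℝ 2 u) (hb : ∀ x, |u x| ≤ 1)
    (heq : ∀ ξ, d * deriv (deriv u) ξ - s * deriv u ξ + r * u ξ * (Θ ξ - u ξ) = 0)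
    (hm : 0 < liminf u atTop)
    (hΘ : ∀ ε > 0, ∀ᶠ ξ in atTop, c - ε < Θ ξ) :
    c ≤ liminf u atTop := by
  set m := liminf u atTop with hmdef
  by_contra hlt
  push_neg at hlt
  set β := c - m with hβ
  have hβpos : 0 < β := by simp [hβ]; linarith
  set δ := min (m / 2) (min (β / 4) (r * m * β / 16)) with hδdef
  have hδpos : 0 < δ := by positivity
  have hδm : δ ≤ m / 2 := min_le_left _ _
  have hδβ : δ ≤ β / 4 := le_trans (min_le_right _ _) (min_le_left _ _)
  have hδr : δ ≤ r * m * β / 16 := le_trans (min_le_right _ _) (min_le_right _ _)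
  have hev1 : ∀ᶠ ξ in atTop, c - δ < Θ ξ := hΘ δ hδpos
  have hev2 : ∀ᶠ ξ in atTop, m - δ < u ξ :=
    eventually_lt_of_lt_liminf (by linarith) (bdd_ge hb)
  obtain ⟨T1, hT1⟩ := eventually_atTop.mp (hev1.and hev2)
  obtain ⟨ξ, hξT, hξu, hξΦ⟩ := key_freq hd hu hb heq hδpos T1
  obtain ⟨hΘξ, huξ⟩ := hT1 ξ hξT
  -- now derive contradiction
  have h1 : m / 2 ≤ u ξ := by linarith
  have h2 : β / 2 ≤ Θ ξ - u ξ := by linarith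
  have h3 : r * (m / 2) * (β / 2) ≤ r * u ξ * (Θ ξ - u ξ) := by
    have := mul_le_mul h1 h2 (by linarith) (by linarith [h1, hm] : (0:ℝ) ≤ u ξ)
    nlinarith
  have : r * m * β / 4 ≤ δ := le_trans (by nlinarith) hξΦ
  nlinarith [hr, hm, hβpos]

/-- max-side inequality -/
lemma limsup_ineq {u Θ : ℝ → ℝ} {d s r c : ℝ} (hd : 0 < d) (hr : 0 < r)
    (hu : ContDiff ℝ 2 u) (hb : ∀ x, |u x| ≤ 1)
    (heq : ∀ ξ, d * deriv (deriv u) ξ - s * deriv u ξ + r * u ξ * (Θ ξ - u ξ) = 0)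
    (hm : 0 < liminf u atTop)
    (hΘ : ∀ ε > 0, ∀ᶠ ξ in atTop, Θ ξ < c + ε) :
    -liminf (fun ξ => -u ξ) atTop ≤ c := by
  set m := liminf u atTop with hmdef
  set M := -liminf (fun ξ => -u ξ) atTop with hMdef
  by_contra hlt
  push_neg at hlt
  set β := M - c with hβ
  have hβpos : 0 < β := by simp [hβ]; linarith
  set δ := min (m / 2) (min (β / 4) (r * m * β / 16)) with hδdef
  have hδpos : 0 < δ := by positivity
  have hδm : δ ≤ m / 2 := min_le_left _ _
  have hδβ : δ ≤ β / 4 := le_trans (min_le_right _ _) (min_le_left _ _)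
  have hδr : δ ≤ r * m * β / 16 := le_trans (min_le_right _ _) (min_le_right _ _)
  -- apply key to -u
  have hneg : ∀ x, |(fun ξ => -u ξ) x| ≤ 1 := fun x => by simpa [abs_neg] using hb x
  have hderiv1 : deriv (fun ξ => -u ξ) = fun ξ => -deriv u ξ := by
    funext x; exact deriv.neg
  have hderiv2 : ∀ ξ, deriv (deriv (fun ξ => -u ξ)) ξ = -deriv (deriv u) ξ := by
    intro ξ; rw [hderiv1]; exact deriv.neg
  have heqneg : ∀ ξ, d * deriv (deriv (fun ξ => -u ξ)) ξ - s * deriv (fun ξ => -u ξ) ξ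
      + (-(r * u ξ * (Θ ξ - u ξ))) = 0 := by
    intro ξ
    rw [hderiv2, hderiv1]
    have := heq ξ
    simp only
    linarith
  have hev1 : ∀ᶠ ξ in atTop, Θ ξ < c + δ := hΘ δ hδpos
  have hev2 : ∀ᶠ ξ in atTop, m - δ < u ξ :=
    eventually_lt_of_lt_liminf (by linarith) (bdd_ge hb)
  obtain ⟨T1, hT1⟩ := eventually_atTop.mp (hev1.and hev2)
  obtain ⟨ξ, hξT, hξu, hξΦ⟩ := key_freq hd (hu.neg) hneg heqneg hδpos T1
  obtain ⟨hΘξ, huξ⟩ := hT1 ξ hξT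
  have hξu' : -u ξ < liminf (fun ξ => -u ξ) atTop + δ := hξu
  have hliminf : liminf (fun ξ => -u ξ) atTop = -M := by simp [hMdef]
  have hMu : M - δ < u ξ := by rw [hliminf] at hξu'; linarith
  have h1 : m / 2 ≤ u ξ := by linarith
  have h2 : Θ ξ - u ξ ≤ -(β / 2) := by linarith
  have h3 : r * u ξ * (Θ ξ - u ξ) ≤ r * (m / 2) * (-(β / 2)) := by
    have hu0 : 0 < u ξ := by linarith
    have ha : r * u ξ * (Θ ξ - u ξ) ≤ r * u ξ * (-(β / 2)) :=
      mul_le_mul_of_nonneg_left h2 (by positivity)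
    have hb2 : r * u ξ * (-(β / 2)) ≤ r * (m / 2) * (-(β / 2)) :=
      mul_le_mul_of_nonpos_right (mul_le_mul_of_nonneg_left h1 hr.le) (by linarith)
    linarith
  have hΦge : -(r * u ξ * (Θ ξ - u ξ)) ≤ δ := hξΦ
  nlinarith

lemma ev_lower {u : ℝ → ℝ} (hb : ∀ x, |u x| ≤ 1) {ε : ℝ} (hε : 0 < ε) :
    ∀ᶠ ξ in atTop, liminf u atTop - ε < u ξ :=
  eventually_lt_of_lt_liminf (sub_lt_self _ hε) (bdd_ge hb)

lemma ev_upper {u : ℝ → ℝ} (hb : ∀ x, |u x| ≤ 1) {ε : ℝ} (hε : 0 < ε) :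
    ∀ᶠ ξ in atTop, u ξ < -liminf (fun x => -u x) atTop + ε := by
  have hneg : ∀ x, |(fun x => -u x) x| ≤ 1 := fun x => by simpa using hb x
  filter_upwards [ev_lower hneg hε] with ξ h
  have h' : liminf (fun x => -u x) atTop - ε < -u ξ := h
  linarith

lemma m_le_M {u : ℝ → ℝ} (hb : ∀ x, |u x| ≤ 1) :
    liminf u atTop ≤ -liminf (fun x => -u x) atTop := by
  by_contra h
  push_neg at h
  set m := liminf u atTop
  set M := -liminf (fun x => -u x) atTop
  have hε : 0 < (m - M) / 4 := div_pos (by linarith) (by norm_num)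
  obtain ⟨ξ, h1, h2⟩ := ((ev_lower hb hε).and (ev_upper hb hε)).exists
  have : m - (m - M) / 4 < u ξ := h1
  have : u ξ < M + (m - M) / 4 := h2
  linarith

lemma tendsto_of_liminfs {u : ℝ → ℝ} {L : ℝ} (hb : ∀ x, |u x| ≤ 1)
    (h1 : liminf u atTop = L) (h2 : liminf (fun x => -u x) atTop = -L) :
    Tendsto u atTop (𝓝 L) := by
  rw [tendsto_order]
  constructor
  · intro b hbL
    exact eventually_lt_of_lt_liminf (h1 ▸ hbL) (bdd_ge hb)
  · intro b hbL
    have hneg : ∀ x, |(fun x => -u x) x| ≤ 1 := fun x => by simpa using hb x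
    have : ∀ᶠ ξ in atTop, -b < -u ξ :=
      eventually_lt_of_lt_liminf (by rw [h2]; linarith) (bdd_ge hneg)
    filter_upwards [this] with ξ h
    have h' : -b < -u ξ := h
    linarith

end SavannaAux

set_option maxHeartbeats 1000000

/-- Lemma 3.3 (shrinking box argument): a bounded positive solution of the traveling
wave system whose components have strictly positive limit inferior at `+∞` converges
to the coexistence state at `+∞`. -/
theorem savanna_shrinking_box
    (dW dH dG dB rW rH cW cH eW eH κ1 κ2 s : ℝ)
    (hdW : 0 < dW) (hdH : 0 < dH) (hdG : 0 < dG) (hdB : 0 < dB)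
    (hrW : 0 < rW) (hrH : 0 < rH) (hcW : 0 < cW) (hcH : 0 < cH)
    (heW : 0 < eW) (heH : 0 < eH)
    (hκ1 : 0 ≤ κ1) (hκ2 : 0 ≤ κ2)
    (hW1 : 1 - κ1 - cW / rW > 0) (hH1 : 1 - κ2 - cH / rH > 0)
    (W H G B : ℝ → ℝ)
    (hWc : ContDiff ℝ 2 W) (hHc : ContDiff ℝ 2 H)
    (hGc : ContDiff ℝ 2 G) (hBc : ContDiff ℝ 2 B)
    (hWb : ∀ ξ, 0 < W ξ ∧ W ξ ≤ 1) (hHb : ∀ ξ, 0 < H ξ ∧ H ξ ≤ 1)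
    (hGb : ∀ ξ, 0 < G ξ ∧ G ξ ≤ 1) (hBb : ∀ ξ, 0 < B ξ ∧ B ξ ≤ 1)
    (heqW : ∀ ξ, dW * deriv (deriv W) ξ - s * deriv W ξ
        + rW * W ξ * (1 - W ξ - κ1 * H ξ) - cW * B ξ * W ξ = 0)
    (heqH : ∀ ξ, dH * deriv (deriv H) ξ - s * deriv H ξ
        + rH * H ξ * (1 - H ξ - κ2 * W ξ) - cH * G ξ * H ξ = 0)
    (heqG : ∀ ξ, dG * deriv (deriv G) ξ - s * deriv G ξ + eH * G ξ * (H ξ - G ξ) = 0)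
    (heqB : ∀ ξ, dB * deriv (deriv B) ξ - s * deriv B ξ + eW * B ξ * (W ξ - B ξ) = 0)
    (hWinf : 0 < Filter.liminf W atTop) (hHinf : 0 < Filter.liminf H atTop)
    (hGinf : 0 < Filter.liminf G atTop) (hBinf : 0 < Filter.liminf B atTop) :
    Tendsto W atTop (nhds ((rW * (rH + cH) - rW * rH * κ1) /
        ((rW + cW) * (rH + cH) - rW * rH * κ1 * κ2))) ∧
    Tendsto H atTop (nhds ((rH * (rW + cW) - rW * rH * κ2) /
        ((rW + cW) * (rH + cH) - rW * rH * κ1 * κ2))) ∧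
    Tendsto G atTop (nhds ((rH * (rW + cW) - rW * rH * κ2) /
        ((rW + cW) * (rH + cH) - rW * rH * κ1 * κ2))) ∧
    Tendsto B atTop (nhds ((rW * (rH + cH) - rW * rH * κ1) /
        ((rW + cW) * (rH + cH) - rW * rH * κ1 * κ2))) := by
  have hWa : ∀ x, |W x| ≤ 1 := fun x => abs_le.mpr ⟨by linarith [(hWb x).1], (hWb x).2⟩
  have hHa : ∀ x, |H x| ≤ 1 := fun x => abs_le.mpr ⟨by linarith [(hHb x).1], (hHb x).2⟩
  have hGa : ∀ x, |G x| ≤ 1 := fun x => abs_le.mpr ⟨by linarith [(hGb x).1], (hGb x).2⟩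
  have hBa : ∀ x, |B x| ≤ 1 := fun x => abs_le.mpr ⟨by linarith [(hBb x).1], (hBb x).2⟩
  have ha : 0 < cW / rW := div_pos hcW hrW
  have hb : 0 < cH / rH := div_pos hcH hrH
  -- reshaped equations
  have heqW' : ∀ ξ, dW * deriv (deriv W) ξ - s * deriv W ξ
      + rW * W ξ * ((1 - κ1 * H ξ - cW / rW * B ξ) - W ξ) = 0 := by
    intro ξ
    have h0 := heqW ξ
    have hexp : rW * W ξ * ((1 - κ1 * H ξ - cW / rW * B ξ) - W ξ)
        = rW * W ξ * (1 - W ξ - κ1 * H ξ) - cW * B ξ * W ξ := by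
      field_simp
      ring
    linarith
  have heqH' : ∀ ξ, dH * deriv (deriv H) ξ - s * deriv H ξ
      + rH * H ξ * ((1 - κ2 * W ξ - cH / rH * G ξ) - H ξ) = 0 := by
    intro ξ
    have h0 := heqH ξ
    have hexp : rH * H ξ * ((1 - κ2 * W ξ - cH / rH * G ξ) - H ξ)
        = rH * H ξ * (1 - H ξ - κ2 * W ξ) - cH * G ξ * H ξ := by
      field_simp
      ring
    linarith
  -- the 8 inequalities
  have hG1 : liminf H atTop ≤ liminf G atTop := by
    apply liminf_ineq (Θ := H) hdG heH hGc hGa heqG hGinf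
    intro ε hε
    filter_upwards [ev_lower hHa hε] with ξ h using h
  have hG2 : -liminf (fun ξ => -G ξ) atTop ≤ -liminf (fun ξ => -H ξ) atTop := by
    apply limsup_ineq (Θ := H) hdG heH hGc hGa heqG hGinf
    intro ε hε
    filter_upwards [ev_upper hHa hε] with ξ h using h
  have hB1 : liminf W atTop ≤ liminf B atTop := by
    apply liminf_ineq (Θ := W) hdB heW hBc hBa heqB hBinf
    intro ε hε
    filter_upwards [ev_lower hWa hε] with ξ h using h
  have hB2 : -liminf (fun ξ => -B ξ) atTop ≤ -liminf (fun ξ => -W ξ) atTop := by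
    apply limsup_ineq (Θ := W) hdB heW hBc hBa heqB hBinf
    intro ε hε
    filter_upwards [ev_upper hWa hε] with ξ h using h
  have hW2 : 1 - κ1 * (-liminf (fun ξ => -H ξ) atTop)
      - cW / rW * (-liminf (fun ξ => -W ξ) atTop) ≤ liminf W atTop := by
    apply liminf_ineq (Θ := fun ξ => 1 - κ1 * H ξ - cW / rW * B ξ) hdW hrW hWc hWa heqW' hWinf
    intro ε hε
    have hε1 : 0 < ε / (κ1 + cW / rW + 1) := by positivity
    filter_upwards [ev_upper hHa hε1, ev_upper hBa hε1] with ξ h1 h2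
    have l1 : κ1 * H ξ ≤ κ1 * (-liminf (fun x => -H x) atTop + ε / (κ1 + cW / rW + 1)) :=
      mul_le_mul_of_nonneg_left h1.le hκ1
    have l2 : cW / rW * B ξ ≤ cW / rW * (-liminf (fun x => -W x) atTop + ε / (κ1 + cW / rW + 1)) := by
      apply mul_le_mul_of_nonneg_left _ ha.le
      linarith [hB2]
    have hεeq : (ε / (κ1 + cW / rW + 1)) * (κ1 + cW / rW + 1) = ε := by field_simp
    linarith only [hε1, l1, l2, hεeq, h1, h2]
  have hW3 : -liminf (fun ξ => -W ξ) atTop ≤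
      1 - κ1 * liminf H atTop - cW / rW * liminf W atTop := by
    apply limsup_ineq (Θ := fun ξ => 1 - κ1 * H ξ - cW / rW * B ξ) hdW hrW hWc hWa heqW' hWinf
    intro ε hε
    have hε1 : 0 < ε / (κ1 + cW / rW + 1) := by positivity
    filter_upwards [ev_lower hHa hε1, ev_lower hBa hε1] with ξ h1 h2
    have l1 : κ1 * (liminf H atTop - ε / (κ1 + cW / rW + 1)) ≤ κ1 * H ξ :=
      mul_le_mul_of_nonneg_left h1.le hκ1
    have l2 : cW / rW * (liminf W atTop - ε / (κ1 + cW / rW + 1)) ≤ cW / rW * B ξ := by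
      apply mul_le_mul_of_nonneg_left _ ha.le
      linarith [hB1]
    have hεeq : (ε / (κ1 + cW / rW + 1)) * (κ1 + cW / rW + 1) = ε := by field_simp
    linarith only [hε1, l1, l2, hεeq, h1, h2]
  have hH2 : 1 - κ2 * (-liminf (fun ξ => -W ξ) atTop)
      - cH / rH * (-liminf (fun ξ => -H ξ) atTop) ≤ liminf H atTop := by
    apply liminf_ineq (Θ := fun ξ => 1 - κ2 * W ξ - cH / rH * G ξ) hdH hrH hHc hHa heqH' hHinf
    intro ε hε
    have hε1 : 0 < ε / (κ2 + cH / rH + 1) := by positivity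
    filter_upwards [ev_upper hWa hε1, ev_upper hGa hε1] with ξ h1 h2
    have l1 : κ2 * W ξ ≤ κ2 * (-liminf (fun x => -W x) atTop + ε / (κ2 + cH / rH + 1)) :=
      mul_le_mul_of_nonneg_left h1.le hκ2
    have l2 : cH / rH * G ξ ≤ cH / rH * (-liminf (fun x => -H x) atTop + ε / (κ2 + cH / rH + 1)) := by
      apply mul_le_mul_of_nonneg_left _ hb.le
      linarith [hG2]
    have hεeq : (ε / (κ2 + cH / rH + 1)) * (κ2 + cH / rH + 1) = ε := by field_simp
    linarith only [hε1, l1, l2, hεeq, h1, h2]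
  have hH3 : -liminf (fun ξ => -H ξ) atTop ≤
      1 - κ2 * liminf W atTop - cH / rH * liminf H atTop := by
    apply limsup_ineq (Θ := fun ξ => 1 - κ2 * W ξ - cH / rH * G ξ) hdH hrH hHc hHa heqH' hHinf
    intro ε hε
    have hε1 : 0 < ε / (κ2 + cH / rH + 1) := by positivity
    filter_upwards [ev_lower hWa hε1, ev_lower hGa hε1] with ξ h1 h2
    have l1 : κ2 * (liminf W atTop - ε / (κ2 + cH / rH + 1)) ≤ κ2 * W ξ :=
      mul_le_mul_of_nonneg_left h1.le hκ2
    have l2 : cH / rH * (liminf H atTop - ε / (κ2 + cH / rH + 1)) ≤ cH / rH * G ξ := by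
      apply mul_le_mul_of_nonneg_left _ hb.le
      linarith [hG1]
    have hεeq : (ε / (κ2 + cH / rH + 1)) * (κ2 + cH / rH + 1) = ε := by field_simp
    linarith only [hε1, l1, l2, hεeq, h1, h2]
  -- m ≤ M facts
  have hWmM := m_le_M hWa
  have hHmM := m_le_M hHa
  have hGmM := m_le_M hGa
  have hBmM := m_le_M hBa
  -- abbreviations
  obtain ⟨mW, hmW⟩ : ∃ x, x = liminf W atTop := ⟨_, rfl⟩
  obtain ⟨mH, hmH⟩ : ∃ x, x = liminf H atTop := ⟨_, rfl⟩
  obtain ⟨mG, hmG⟩ : ∃ x, x = liminf G atTop := ⟨_, rfl⟩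
  obtain ⟨mB, hmB⟩ : ∃ x, x = liminf B atTop := ⟨_, rfl⟩
  obtain ⟨MW, hMW⟩ : ∃ x, x = -liminf (fun ξ => -W ξ) atTop := ⟨_, rfl⟩
  obtain ⟨MH, hMH⟩ : ∃ x, x = -liminf (fun ξ => -H ξ) atTop := ⟨_, rfl⟩
  obtain ⟨MG, hMG⟩ : ∃ x, x = -liminf (fun ξ => -G ξ) atTop := ⟨_, rfl⟩
  obtain ⟨MB, hMB⟩ : ∃ x, x = -liminf (fun ξ => -B ξ) atTop := ⟨_, rfl⟩
  simp only [← hmW, ← hmH, ← hmG, ← hmB, ← hMW, ← hMH, ← hMG, ← hMB] at hW2 hW3 hH2 hH3 hG1 hG2 hB1 hB2 hWmM hHmM hGmM hBmM hWinf hHinf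
  -- algebra: MW = mW and MH = mH
  have e1 : (1 - cW / rW) * (MW - mW) ≤ κ1 * (MH - mH) := by linarith only [hW2, hW3]
  have e2 : (1 - cH / rH) * (MH - mH) ≤ κ2 * (MW - mW) := by linarith only [hH2, hH3]
  have hκ1a : κ1 < 1 - cW / rW := by linarith
  have hκ2b : κ2 < 1 - cH / rH := by linarith
  have hbpos : (0:ℝ) < 1 - cH / rH := by linarith
  have hapos : (0:ℝ) < 1 - cW / rW := by linarith
  have hcoef : κ1 * κ2 < (1 - cW / rW) * (1 - cH / rH) := by
    have s1 : κ1 * κ2 ≤ κ1 * (1 - cH / rH) := mul_le_mul_of_nonneg_left hκ2b.le hκ1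
    have s2 : κ1 * (1 - cH / rH) < (1 - cW / rW) * (1 - cH / rH) :=
      mul_lt_mul_of_pos_right hκ1a hbpos
    linarith
  have hu0 : MW - mW = 0 := by
    have h12 : (1 - cH / rH) * ((1 - cW / rW) * (MW - mW)) ≤ (1 - cH / rH) * (κ1 * (MH - mH)) :=
      mul_le_mul_of_nonneg_left e1 hbpos.le
    have h13 : κ1 * ((1 - cH / rH) * (MH - mH)) ≤ κ1 * (κ2 * (MW - mW)) :=
      mul_le_mul_of_nonneg_left e2 hκ1
    have hle : MW - mW ≤ 0 := by
      by_contra hpos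
      push_neg at hpos
      have hmul := mul_lt_mul_of_pos_right hcoef hpos
      linarith only [h12, h13, hmul]
    linarith [hWmM]
  have hv0 : MH - mH = 0 := by
    have hz : κ2 * (MW - mW) = 0 := by rw [hu0]; ring
    have hvle : MH - mH ≤ 0 := by
      by_contra hv
      push_neg at hv
      linarith only [mul_pos hbpos hv, e2, hz]
    linarith [hHmM]
  -- exact coexistence values
  have A1 : 1 - κ1 * mH - cW / rW * mW ≤ mW := by
    have := hW2; rw [show MH = mH by linarith, show MW = mW by linarith] at this; linarith
  have A2 : mW ≤ 1 - κ1 * mH - cW / rW * mW := by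
    have := hW3; rw [show MW = mW by linarith] at this; linarith
  have A3 : 1 - κ2 * mW - cH / rH * mH ≤ mH := by
    have := hH2; rw [show MH = mH by linarith, show MW = mW by linarith] at this; linarith
  have A4 : mH ≤ 1 - κ2 * mW - cH / rH * mH := by
    have := hH3; linarith
  have eW1 : (rW + cW) * mW + rW * κ1 * mH = rW := by
    have h' : mW = 1 - κ1 * mH - cW / rW * mW := le_antisymm A2 A1
    have h'' : mW * rW = (1 - κ1 * mH - cW / rW * mW) * rW := by rw [← h']
    field_simp at h''
    linarith
  have eH1 : (rH + cH) * mH + rH * κ2 * mW = rH := by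
    have h' : mH = 1 - κ2 * mW - cH / rH * mH := le_antisymm A4 A3
    have h'' : mH * rH = (1 - κ2 * mW - cH / rH * mH) * rH := by rw [← h']
    field_simp at h''
    linarith
  have hκ1lt : κ1 < 1 := by linarith
  have hκ2lt : κ2 < 1 := by linarith
  have hD : 0 < (rW + cW) * (rH + cH) - rW * rH * κ1 * κ2 := by
    have hκκ : κ1 * κ2 < 1 := by
      have s1 : κ1 * κ2 ≤ κ1 * 1 := mul_le_mul_of_nonneg_left hκ2lt.le hκ1
      linarith only [s1, hκ1lt]
    have h1 : rW * rH * (κ1 * κ2) < rW * rH * 1 :=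
      mul_lt_mul_of_pos_left hκκ (mul_pos hrW hrH)
    have h2 : rW * rH < (rW + cW) * (rH + cH) := by
      linarith only [mul_pos hrW hcH, mul_pos hcW hrH, mul_pos hcW hcH]
    linarith only [h1, h2]
  have hmWval : mW = (rW * (rH + cH) - rW * rH * κ1) /
      ((rW + cW) * (rH + cH) - rW * rH * κ1 * κ2) := by
    rw [eq_div_iff hD.ne']
    linear_combination (rH + cH) * eW1 - rW * κ1 * eH1
  have hmHval : mH = (rH * (rW + cW) - rW * rH * κ2) /
      ((rW + cW) * (rH + cH) - rW * rH * κ1 * κ2) := by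
    rw [eq_div_iff hD.ne']
    linear_combination (rW + cW) * eH1 - rH * κ2 * eW1
  -- G and B pinches
  have hmGval : mG = (rH * (rW + cW) - rW * rH * κ2) /
      ((rW + cW) * (rH + cH) - rW * rH * κ1 * κ2) := by
    rw [← hmHval]; linarith
  have hMGval : MG = mG := by linarith [hG1, hG2, hGmM]
  have hmBval : mB = (rW * (rH + cH) - rW * rH * κ1) /
      ((rW + cW) * (rH + cH) - rW * rH * κ1 * κ2) := by
    rw [← hmWval]; linarith
  have hMBval : MB = mB := by linarith [hB1, hB2, hBmM]
  -- conclude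
  refine ⟨?_, ?_, ?_, ?_⟩
  · exact tendsto_of_liminfs hWa (hmW.symm.trans hmWval)
      (by linarith only [hMW, hu0, hmWval])
  · exact tendsto_of_liminfs hHa (hmH.symm.trans hmHval)
      (by linarith only [hMH, hv0, hmHval])
  · exact tendsto_of_liminfs hGa (hmG.symm.trans hmGval)
      (by linarith only [hMG, hMGval, hmGval])
  · exact tendsto_of_liminfs hBa (hmB.symm.trans hmBval)
      (by linarith only [hMB, hMBval, hmBval])
end

section
/- Let d > 0, α > 0 and s ∈ ℝ, and set λ⁻ = (s − √(s² + 4αd))/(2d) and λ⁺ = (s + √(s² + 4αd))/(2d). Let φ : ℝ → ℝ be twice continuously differentiable with φ, φ' and φ'' bounded on ℝ, and set f = −d φ'' + s φ' + α φ. Then for every ξ ∈ ℝ, (1/(d(λ⁺ − λ⁻))) ( ∫_{−∞}^{ξ} e^{λ⁻(ξ−z)} f(z) dz + ∫_{ξ}^{∞} e^{λ⁺(ξ−z)} f(z) dz ) = φ(ξ). -/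
open Real MeasureTheory Filter Set Topology

-- integrability of the exponential kernel on the left half-line (c < 0)
lemma expKernel_integrableOn_Iic (c ξ : ℝ) (hc : c < 0) :
    IntegrableOn (fun z => Real.exp (c * (ξ - z))) (Set.Iic ξ) := by
  have h : IntegrableOn (fun y => Real.exp (c * y)) (Set.Ioi (0:ℝ)) := by
    have := exp_neg_integrableOn_Ioi (0:ℝ) (neg_pos.mpr hc)
    simpa using this
  have hmp : MeasurePreserving (fun x : ℝ => ξ - x) volume volume :=
    Measure.measurePreserving_sub_left volume ξ
  have hemb : MeasurableEmbedding (fun x : ℝ => ξ - x) :=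
    (MeasurableEquiv.subLeft ξ).measurableEmbedding
  have h2 := (hmp.integrableOn_comp_preimage hemb).mpr h
  have hpre : (fun x : ℝ => ξ - x) ⁻¹' (Set.Ioi 0) = Set.Iio ξ := by
    ext x; simp [sub_pos]
  rw [hpre] at h2
  rw [integrableOn_Iic_iff_integrableOn_Iio]
  exact h2.congr_fun (fun x _ => rfl) measurableSet_Iio

lemma expKernel_integrableOn_Ici (c ξ : ℝ) (hc : 0 < c) :
    IntegrableOn (fun z => Real.exp (c * (ξ - z))) (Set.Ici ξ) := by
  have h : IntegrableOn (fun y => Real.exp (-c * y)) (Set.Ioi (0:ℝ)) :=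
    exp_neg_integrableOn_Ioi (0:ℝ) hc
  have hmp : MeasurePreserving (fun x : ℝ => x - ξ) volume volume :=
    measurePreserving_sub_right volume ξ
  have hemb : MeasurableEmbedding (fun x : ℝ => x - ξ) :=
    (MeasurableEquiv.subRight ξ).measurableEmbedding
  have h2 := (hmp.integrableOn_comp_preimage hemb).mpr h
  have hpre : (fun x : ℝ => x - ξ) ⁻¹' (Set.Ioi 0) = Set.Ioi ξ := by
    ext x; simp [sub_pos]
  rw [hpre] at h2
  rw [integrableOn_Ici_iff_integrableOn_Ioi]
  refine h2.congr_fun (fun x _ => ?_) measurableSet_Ioi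
  simp only [Function.comp]
  ring_nf

-- the antiderivative identity
lemma kernel_hasDerivAt (d s α lam ξ : ℝ) (hroot : d * lam ^ 2 - s * lam - α = 0)
    (φ : ℝ → ℝ) (hφ1 : Differentiable ℝ φ) (hφ2 : Differentiable ℝ (deriv φ)) (z : ℝ) :
    HasDerivAt (fun z => Real.exp (lam * (ξ - z)) * (-d * deriv φ z + (s - d * lam) * φ z))
      (Real.exp (lam * (ξ - z)) * (-d * deriv (deriv φ) z + s * deriv φ z + α * φ z)) z := by
  have h1 : HasDerivAt φ (deriv φ z) z := (hφ1 z).hasDerivAt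
  have h2 : HasDerivAt (deriv φ) (deriv (deriv φ) z) z := (hφ2 z).hasDerivAt
  have hexp : HasDerivAt (fun z : ℝ => Real.exp (lam * (ξ - z)))
      (-lam * Real.exp (lam * (ξ - z))) z := by
    have hin : HasDerivAt (fun z : ℝ => lam * (ξ - z)) (-lam) z := by
      simpa using ((hasDerivAt_id z).const_sub ξ).const_mul lam
    exact ((Real.hasDerivAt_exp (lam * (ξ - z))).comp z hin).congr_deriv (by ring : _ = -lam * Real.exp (lam * (ξ - z)))
  have hg : HasDerivAt (fun z => -d * deriv φ z + (s - d * lam) * φ z)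
      (-d * deriv (deriv φ) z + (s - d * lam) * deriv φ z) z :=
    (h2.const_mul (-d)).add (h1.const_mul (s - d * lam))
  have := hexp.mul hg
  refine HasDerivAt.congr_deriv this ?_
  have : α = d * lam ^ 2 - s * lam := by linarith
  rw [this]; ring

/-- The Green's-function representation inverts the operator `φ ↦ −dφ'' + sφ' + αφ`
on bounded `C²` functions. -/
theorem greens_function_left_inverse
    (d α s : ℝ) (hd : 0 < d) (hα : 0 < α)
    (lamm lamp : ℝ)
    (hlamm : lamm = (s - Real.sqrt (s ^ 2 + 4 * α * d)) / (2 * d))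
    (hlamp : lamp = (s + Real.sqrt (s ^ 2 + 4 * α * d)) / (2 * d))
    (φ : ℝ → ℝ) (hφ : ContDiff ℝ 2 φ)
    (hφb : ∃ M, ∀ ξ, |φ ξ| ≤ M)
    (hφ'b : ∃ M, ∀ ξ, |deriv φ ξ| ≤ M)
    (hφ''b : ∃ M, ∀ ξ, |deriv (deriv φ) ξ| ≤ M) :
    ∀ ξ, (1 / (d * (lamp - lamm))) *
        ((∫ z in Set.Iic ξ, Real.exp (lamm * (ξ - z)) *
            (-d * deriv (deriv φ) z + s * deriv φ z + α * φ z)) +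
         (∫ z in Set.Ici ξ, Real.exp (lamp * (ξ - z)) *
            (-d * deriv (deriv φ) z + s * deriv φ z + α * φ z))) = φ ξ := by
  intro ξ
  obtain ⟨M0, hM0⟩ := hφb
  obtain ⟨M1, hM1⟩ := hφ'b
  obtain ⟨M2, hM2⟩ := hφ''b
  -- regularity
  have hφ11 : ContDiff ℝ (1 + 1 : WithTop ℕ∞) φ := by
    rw [one_add_one_eq_two]; exact hφ
  have hφ1 : Differentiable ℝ φ := hφ.differentiable (by norm_num)
  have hφ'C1 : ContDiff ℝ 1 (deriv φ) := (contDiff_succ_iff_deriv.mp hφ11).2.2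
  have hφ2 : Differentiable ℝ (deriv φ) := hφ'C1.differentiable one_ne_zero
  have hφ''c : Continuous (deriv (deriv φ)) := hφ'C1.continuous_deriv le_rfl
  have hfc : Continuous (fun z => -d * deriv (deriv φ) z + s * deriv φ z + α * φ z) := by
    fun_prop
  -- root facts
  set D := Real.sqrt (s ^ 2 + 4 * α * d) with hD
  have hD2 : D ^ 2 = s ^ 2 + 4 * α * d := Real.sq_sqrt (by positivity)
  have hDpos : 0 < D := Real.sqrt_pos.mpr (by positivity)
  have hsD : s < D := by nlinarith [abs_nonneg s, le_abs_self s, sq_abs s]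
  have hsD' : -D < s := by nlinarith
  have hm : lamm < 0 := by
    rw [hlamm]; apply div_neg_of_neg_of_pos <;> linarith
  have hp : 0 < lamp := by
    rw [hlamp]; apply div_pos <;> linarith
  have hrootm : d * lamm ^ 2 - s * lamm - α = 0 := by
    rw [hlamm]; field_simp; nlinarith
  have hrootp : d * lamp ^ 2 - s * lamp - α = 0 := by
    rw [hlamp]; field_simp; nlinarith
  have hdiff : d * (lamp - lamm) = D := by
    rw [hlamp, hlamm]; field_simp; ring
  -- bound on f
  set Mf := d * M2 + |s| * M1 + α * M0 with hMf
  have hM0' : 0 ≤ M0 := le_trans (abs_nonneg _) (hM0 0)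
  have hM1' : 0 ≤ M1 := le_trans (abs_nonneg _) (hM1 0)
  have hM2' : 0 ≤ M2 := le_trans (abs_nonneg _) (hM2 0)
  have hfb : ∀ z, |(-d * deriv (deriv φ) z + s * deriv φ z + α * φ z)| ≤ Mf := by
    intro z
    calc |(-d * deriv (deriv φ) z + s * deriv φ z + α * φ z)|
        ≤ |(-d) * deriv (deriv φ) z| + |s * deriv φ z| + |α * φ z| := by
          exact (abs_add_le _ _).trans (by gcongr; exact abs_add_le _ _)
      _ ≤ d * M2 + |s| * M1 + α * M0 := by
          rw [abs_mul, abs_mul, abs_mul, abs_neg, abs_of_pos hd, abs_of_pos hα]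
          gcongr <;> [exact hM2 z; exact hM1 z; exact hM0 z]
  -- integrability of the two integrands
  have hintm : IntegrableOn
      (fun z => Real.exp (lamm * (ξ - z)) * (-d * deriv (deriv φ) z + s * deriv φ z + α * φ z))
      (Set.Iic ξ) := by
    refine Integrable.mono' ((expKernel_integrableOn_Iic lamm ξ hm).const_mul Mf) ?_ ?_
    · exact ((Real.continuous_exp.comp (by fun_prop)).mul hfc).aestronglyMeasurable
    · filter_upwards with z
      rw [norm_mul, Real.norm_eq_abs, Real.norm_eq_abs, abs_exp, mul_comm Mf]
      exact mul_le_mul_of_nonneg_left (hfb z) (Real.exp_pos _).le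
  have hintp : IntegrableOn
      (fun z => Real.exp (lamp * (ξ - z)) * (-d * deriv (deriv φ) z + s * deriv φ z + α * φ z))
      (Set.Ici ξ) := by
    refine Integrable.mono' ((expKernel_integrableOn_Ici lamp ξ hp).const_mul Mf) ?_ ?_
    · exact ((Real.continuous_exp.comp (by fun_prop)).mul hfc).aestronglyMeasurable
    · filter_upwards with z
      rw [norm_mul, Real.norm_eq_abs, Real.norm_eq_abs, abs_exp, mul_comm Mf]
      exact mul_le_mul_of_nonneg_left (hfb z) (Real.exp_pos _).le
  -- the antiderivatives
  set gm : ℝ → ℝ := fun z => Real.exp (lamm * (ξ - z)) * (-d * deriv φ z + (s - d * lamm) * φ z)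
    with hgm
  set gp : ℝ → ℝ := fun z => Real.exp (lamp * (ξ - z)) * (-d * deriv φ z + (s - d * lamp) * φ z)
    with hgp
  have hdm : ∀ z, HasDerivAt gm
      (Real.exp (lamm * (ξ - z)) * (-d * deriv (deriv φ) z + s * deriv φ z + α * φ z)) z :=
    kernel_hasDerivAt d s α lamm ξ hrootm φ hφ1 hφ2
  have hdp : ∀ z, HasDerivAt gp
      (Real.exp (lamp * (ξ - z)) * (-d * deriv (deriv φ) z + s * deriv φ z + α * φ z)) z :=
    kernel_hasDerivAt d s α lamp ξ hrootp φ hφ1 hφ2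
  -- limits at infinity
  have hlimm : Tendsto gm atBot (𝓝 0) := by
    have hexp : Tendsto (fun z => Real.exp (lamm * (ξ - z))) atBot (𝓝 0) := by
      apply Real.tendsto_exp_atBot.comp
      have h1 : Tendsto (fun z : ℝ => ξ - z) atBot atTop := by
        simpa [sub_eq_add_neg] using tendsto_atTop_add_const_left atBot ξ
          (tendsto_neg_atBot_atTop (G := ℝ))
      exact (tendsto_const_mul_atBot_of_neg hm).mpr h1
    have hb : ∀ z, |(-d * deriv φ z + (s - d * lamm) * φ z)| ≤ d * M1 + |s - d * lamm| * M0 := by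
      intro z
      calc |(-d * deriv φ z + (s - d * lamm) * φ z)|
          ≤ |(-d) * deriv φ z| + |(s - d * lamm) * φ z| := abs_add_le _ _
        _ ≤ d * M1 + |s - d * lamm| * M0 := by
            rw [abs_mul, abs_mul, abs_neg, abs_of_pos hd]
            gcongr <;> [exact hM1 z; exact hM0 z]
    have hbdd : Filter.IsBoundedUnder (· ≤ ·) atBot
        (fun z => ‖-d * deriv φ z + (s - d * lamm) * φ z‖) :=
      Filter.isBoundedUnder_of ⟨d * M1 + |s - d * lamm| * M0,
        fun z => by simpa [Real.norm_eq_abs] using hb z⟩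
    have := hexp.zero_mul_isBoundedUnder_le hbdd
    simpa [hgm, Function.comp] using this
  have hlimp : Tendsto gp atTop (𝓝 0) := by
    have hexp : Tendsto (fun z => Real.exp (lamp * (ξ - z))) atTop (𝓝 0) := by
      apply Real.tendsto_exp_atBot.comp
      have h1 : Tendsto (fun z : ℝ => ξ - z) atTop atBot := by
        simpa [sub_eq_add_neg] using tendsto_atBot_add_const_left atTop ξ
          (tendsto_neg_atTop_atBot (G := ℝ))
      exact (tendsto_const_mul_atBot_of_pos hp).mpr h1
    have hb : ∀ z, |(-d * deriv φ z + (s - d * lamp) * φ z)| ≤ d * M1 + |s - d * lamp| * M0 := by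
      intro z
      calc |(-d * deriv φ z + (s - d * lamp) * φ z)|
          ≤ |(-d) * deriv φ z| + |(s - d * lamp) * φ z| := abs_add_le _ _
        _ ≤ d * M1 + |s - d * lamp| * M0 := by
            rw [abs_mul, abs_mul, abs_neg, abs_of_pos hd]
            gcongr <;> [exact hM1 z; exact hM0 z]
    have hbdd : Filter.IsBoundedUnder (· ≤ ·) atTop
        (fun z => ‖-d * deriv φ z + (s - d * lamp) * φ z‖) :=
      Filter.isBoundedUnder_of ⟨d * M1 + |s - d * lamp| * M0,
        fun z => by simpa [Real.norm_eq_abs] using hb z⟩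
    have := hexp.zero_mul_isBoundedUnder_le hbdd
    simpa [hgp, Function.comp] using this
  -- compute the two integrals
  have hIm : (∫ z in Set.Iic ξ, Real.exp (lamm * (ξ - z)) *
      (-d * deriv (deriv φ) z + s * deriv φ z + α * φ z)) = gm ξ := by
    have := integral_Iic_of_hasDerivAt_of_tendsto' (f := gm)
      (fun x _ => hdm x) hintm hlimm
    rw [this, sub_zero]
  have hIp : (∫ z in Set.Ici ξ, Real.exp (lamp * (ξ - z)) *
      (-d * deriv (deriv φ) z + s * deriv φ z + α * φ z)) = -gp ξ := by
    rw [integral_Ici_eq_integral_Ioi]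
    have := integral_Ioi_of_hasDerivAt_of_tendsto' (f := gp)
      (fun x _ => hdp x) (hintp.mono_set Set.Ioi_subset_Ici_self) hlimp
    rw [this, zero_sub]
  rw [hIm, hIp]
  have hgmξ : gm ξ = -d * deriv φ ξ + (s - d * lamm) * φ ξ := by simp [hgm]
  have hgpξ : gp ξ = -d * deriv φ ξ + (s - d * lamp) * φ ξ := by simp [hgp]
  rw [hgmξ, hgpξ, hdiff]
  have hDne : D ≠ 0 := ne_of_gt hDpos
  have key : (-d * deriv φ ξ + (s - d * lamm) * φ ξ) +
      -(-d * deriv φ ξ + (s - d * lamp) * φ ξ) = D * φ ξ := by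
    have h : d * lamp - d * lamm = D := by rw [← hdiff]; ring
    linear_combination (φ ξ) * h
  rw [key]
  field_simp
end

section
/- Let d > 0, α > 0 and s ∈ ℝ, and set λ⁻ = (s − √(s² + 4αd))/(2d) and λ⁺ = (s + √(s² + 4αd))/(2d). Let f : ℝ → ℝ be continuous with |f(ξ)| ≤ M for all ξ ∈ ℝ, and define u(ξ) = (1/(d(λ⁺ − λ⁻))) ( ∫_{−∞}^{ξ} e^{λ⁻(ξ−z)} f(z) dz + ∫_{ξ}^{∞} e^{λ⁺(ξ−z)} f(z) dz ). Then u is differentiable and |u'(ξ)| ≤ 2M/(d(λ⁺ − λ⁻)) for every ξ ∈ ℝ. -/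
open Real MeasureTheory Set Filter intervalIntegral
open scoped Topology

lemma expMul_intervalIntegral (b : ℝ) (hb : b ≠ 0) (y c : ℝ) :
    ∫ x in y..c, Real.exp (b * x) = (Real.exp (b * c) - Real.exp (b * y)) / b := by
  rw [intervalIntegral.integral_comp_mul_left Real.exp hb, integral_exp, smul_eq_mul,
    inv_mul_eq_div]

lemma integrableOn_expMul_Iic (b : ℝ) (hb : 0 < b) (c : ℝ) :
    IntegrableOn (fun x => Real.exp (b * x)) (Set.Iic c) := by
  refine integrableOn_Iic_of_intervalIntegral_norm_bounded
      (Real.exp (b * c) / b) c (fun y : ℝ => ?_) tendsto_id ?_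
  · exact (Real.continuous_exp.comp (continuous_const.mul continuous_id)).integrableOn_Ioc
  · filter_upwards with y
    simp_rw [Real.norm_eq_abs, abs_of_pos (Real.exp_pos _), id_eq]
    rw [expMul_intervalIntegral b hb.ne' y c]
    gcongr
    linarith [Real.exp_pos (b * y)]

lemma integral_expMul_Iic (b : ℝ) (hb : 0 < b) (c : ℝ) :
    ∫ x in Set.Iic c, Real.exp (b * x) = Real.exp (b * c) / b := by
  refine tendsto_nhds_unique
    (intervalIntegral_tendsto_integral_Iic c (integrableOn_expMul_Iic b hb c) tendsto_id) ?_
  have h1 : Tendsto (fun y : ℝ => Real.exp (b * y)) atBot (𝓝 0) :=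
    Real.tendsto_exp_atBot.comp (tendsto_id.const_mul_atBot hb)
  have h2 : Tendsto (fun y : ℝ => (Real.exp (b * c) - Real.exp (b * y)) / b) atBot
      (𝓝 ((Real.exp (b * c) - 0) / b)) :=
    ((tendsto_const_nhds.sub h1).div_const b)
  rw [sub_zero] at h2
  refine h2.congr fun y => ?_
  rw [id_eq, expMul_intervalIntegral b hb.ne' y c]

/-- Derivative bound for the Green's-function representation: if `|f| ≤ M`, then
the represented solution `u` is differentiable with `|u'| ≤ 2M/(d(λ⁺ − λ⁻))`. -/
theorem greens_function_deriv_bound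
    (d α s M : ℝ) (hd : 0 < d) (hα : 0 < α) (hM : 0 ≤ M)
    (lamm lamp : ℝ)
    (hlamm : lamm = (s - Real.sqrt (s ^ 2 + 4 * α * d)) / (2 * d))
    (hlamp : lamp = (s + Real.sqrt (s ^ 2 + 4 * α * d)) / (2 * d))
    (f : ℝ → ℝ) (hfc : Continuous f) (hfb : ∀ ξ, |f ξ| ≤ M)
    (u : ℝ → ℝ)
    (hu : ∀ ξ, u ξ = (1 / (d * (lamp - lamm))) *
        ((∫ z in Set.Iic ξ, Real.exp (lamm * (ξ - z)) * f z) +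
         (∫ z in Set.Ici ξ, Real.exp (lamp * (ξ - z)) * f z))) :
    Differentiable ℝ u ∧ ∀ ξ, |deriv u ξ| ≤ 2 * M / (d * (lamp - lamm)) := by
  -- basic sign facts
  have hr2 : (0:ℝ) < s ^ 2 + 4 * α * d := by positivity
  have habs : |s| < Real.sqrt (s ^ 2 + 4 * α * d) := by
    rw [← Real.sqrt_sq_eq_abs]
    exact Real.sqrt_lt_sqrt (sq_nonneg s) (by nlinarith)
  have hsle : s < Real.sqrt (s ^ 2 + 4 * α * d) := lt_of_le_of_lt (le_abs_self s) habs
  have hsge : -Real.sqrt (s ^ 2 + 4 * α * d) < s := by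
    have := neg_abs_le s; linarith
  have hlm : lamm < 0 := by
    rw [hlamm]; apply div_neg_of_neg_of_pos <;> [linarith; linarith]
  have hlp : 0 < lamp := by
    rw [hlamp]; apply div_pos <;> [linarith; linarith]
  have hb1 : (0:ℝ) < -lamm := by linarith
  have hden : 0 < d * (lamp - lamm) := mul_pos hd (by linarith)
  set c : ℝ := 1 / (d * (lamp - lamm)) with hc_def
  have hc : 0 < c := by positivity
  -- the two kernels
  set g : ℝ → ℝ := fun z => Real.exp (-lamm * z) * f z with hg_def
  set k : ℝ → ℝ := fun z => Real.exp (lamp * z) * f (-z) with hk_def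
  have hg_cont : Continuous g :=
    ((Real.continuous_exp.comp (continuous_const.mul continuous_id)).mul hfc)
  have hk_cont : Continuous k :=
    ((Real.continuous_exp.comp (continuous_const.mul continuous_id)).mul (hfc.comp continuous_neg))
  have hg_int : ∀ ξ : ℝ, IntegrableOn g (Set.Iic ξ) := by
    intro ξ
    refine Integrable.mono ((integrableOn_expMul_Iic (-lamm) hb1 ξ).const_mul M)
      (hg_cont.aestronglyMeasurable.restrict) ?_
    filter_upwards with z
    simp only [hg_def, Real.norm_eq_abs, abs_mul, abs_of_pos (Real.exp_pos _)]
    rw [abs_of_nonneg hM]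
    have := hfb z
    nlinarith [Real.exp_pos (-lamm * z), abs_nonneg (f z)]
  have hk_int : ∀ t : ℝ, IntegrableOn k (Set.Iic t) := by
    intro t
    refine Integrable.mono ((integrableOn_expMul_Iic lamp hlp t).const_mul M)
      (hk_cont.aestronglyMeasurable.restrict) ?_
    filter_upwards with z
    simp only [hk_def, Real.norm_eq_abs, abs_mul, abs_of_pos (Real.exp_pos _)]
    rw [abs_of_nonneg hM]
    have := hfb (-z)
    nlinarith [Real.exp_pos (lamp * z), abs_nonneg (f (-z))]
  set F : ℝ → ℝ := fun ξ => ∫ z in Set.Iic ξ, g z with hF_def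
  set K : ℝ → ℝ := fun t => ∫ z in Set.Iic t, k z with hK_def
  -- rewriting the two integrals
  have hIm : ∀ ξ : ℝ, (∫ z in Set.Iic ξ, Real.exp (lamm * (ξ - z)) * f z)
      = Real.exp (lamm * ξ) * F ξ := by
    intro ξ
    have hpt : ∀ z : ℝ, Real.exp (lamm * (ξ - z)) * f z
        = Real.exp (lamm * ξ) * (Real.exp (-lamm * z) * f z) := by
      intro z
      rw [← mul_assoc, ← Real.exp_add]
      ring_nf
    simp_rw [hpt]
    rw [MeasureTheory.integral_const_mul]
  have hIp : ∀ ξ : ℝ, (∫ z in Set.Ici ξ, Real.exp (lamp * (ξ - z)) * f z)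
      = Real.exp (lamp * ξ) * K (-ξ) := by
    intro ξ
    have hpt : ∀ z : ℝ, Real.exp (lamp * (ξ - z)) * f z
        = Real.exp (lamp * ξ) * (Real.exp (-lamp * z) * f z) := by
      intro z
      rw [← mul_assoc, ← Real.exp_add]
      ring_nf
    simp_rw [hpt]
    rw [MeasureTheory.integral_const_mul]
    congr 1
    rw [hK_def]
    have := integral_comp_neg_Iic (-ξ) (fun z => Real.exp (-lamp * z) * f z)
    simp only [neg_neg] at this
    rw [integral_Ici_eq_integral_Ioi, ← this]
    refine setIntegral_congr_fun measurableSet_Iic fun z _ => ?_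
    simp only [hk_def]
    ring_nf
  -- derivatives of F and K
  have hF' : ∀ ξ : ℝ, HasDerivAt F (g ξ) ξ := by
    intro ξ
    have h1 : ∀ x : ℝ, F x = F 0 + ∫ t in (0:ℝ)..x, g t := by
      intro x
      have := integral_Iic_sub_Iic (hg_int 0) (hg_int x)
      change F x - F 0 = _ at this
      linarith [this]
    have h2 : HasDerivAt (fun x : ℝ => F 0 + ∫ t in (0:ℝ)..x, g t) (g ξ) ξ :=
      ((hg_cont.integral_hasStrictDerivAt 0 ξ).hasDerivAt).const_add (F 0)
    exact h2.congr_of_eventuallyEq (Eventually.of_forall h1)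
  have hK' : ∀ t : ℝ, HasDerivAt K (k t) t := by
    intro t
    have h1 : ∀ x : ℝ, K x = K 0 + ∫ z in (0:ℝ)..x, k z := by
      intro x
      have := integral_Iic_sub_Iic (hk_int 0) (hk_int x)
      change K x - K 0 = _ at this
      linarith [this]
    have h2 : HasDerivAt (fun x : ℝ => K 0 + ∫ z in (0:ℝ)..x, k z) (k t) t :=
      ((hk_cont.integral_hasStrictDerivAt 0 t).hasDerivAt).const_add (K 0)
    exact h2.congr_of_eventuallyEq (Eventually.of_forall h1)
  -- full derivative of u
  have hu' : ∀ ξ : ℝ, HasDerivAt u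
      (c * (lamm * (Real.exp (lamm * ξ) * F ξ) + lamp * (Real.exp (lamp * ξ) * K (-ξ)))) ξ := by
    intro ξ
    have e1 : HasDerivAt (fun x : ℝ => Real.exp (lamm * x)) (Real.exp (lamm * ξ) * lamm) ξ := by
      simpa using ((hasDerivAt_id ξ).const_mul lamm).exp
    have e2 : HasDerivAt (fun x : ℝ => Real.exp (lamp * x)) (Real.exp (lamp * ξ) * lamp) ξ := by
      simpa using ((hasDerivAt_id ξ).const_mul lamp).exp
    have hGd : HasDerivAt (fun x : ℝ => K (-x)) (k (-ξ) * (-1)) ξ :=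
      (hK' (-ξ)).comp ξ (hasDerivAt_neg ξ)
    have hp1 : HasDerivAt (fun x : ℝ => Real.exp (lamm * x) * F x)
        (Real.exp (lamm * ξ) * lamm * F ξ + Real.exp (lamm * ξ) * g ξ) ξ := e1.mul (hF' ξ)
    have hp2 : HasDerivAt (fun x : ℝ => Real.exp (lamp * x) * K (-x))
        (Real.exp (lamp * ξ) * lamp * K (-ξ) + Real.exp (lamp * ξ) * (k (-ξ) * (-1))) ξ :=
      e2.mul hGd
    have hsum := ((hp1.add hp2).const_mul c)
    have heq : ∀ x : ℝ, u x
        = c * (Real.exp (lamm * x) * F x + Real.exp (lamp * x) * K (-x)) := by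
      intro x
      rw [hu x, hIm x, hIp x, hc_def]
    have key : HasDerivAt u
        (c * ((Real.exp (lamm * ξ) * lamm * F ξ + Real.exp (lamm * ξ) * g ξ)
          + (Real.exp (lamp * ξ) * lamp * K (-ξ) + Real.exp (lamp * ξ) * (k (-ξ) * (-1))))) ξ :=
      hsum.congr_of_eventuallyEq (Eventually.of_forall heq)
    have ecan1 : Real.exp (lamm * ξ) * g ξ = f ξ := by
      simp only [hg_def]
      rw [← mul_assoc, ← Real.exp_add, show lamm * ξ + -lamm * ξ = 0 by ring, Real.exp_zero,
        one_mul]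
    have ecan2 : Real.exp (lamp * ξ) * k (-ξ) = f ξ := by
      simp only [hk_def, neg_neg]
      rw [← mul_assoc, ← Real.exp_add, show lamp * ξ + lamp * -ξ = 0 by ring, Real.exp_zero,
        one_mul]
    have hval : c * ((Real.exp (lamm * ξ) * lamm * F ξ + Real.exp (lamm * ξ) * g ξ)
          + (Real.exp (lamp * ξ) * lamp * K (-ξ) + Real.exp (lamp * ξ) * (k (-ξ) * (-1))))
        = c * (lamm * (Real.exp (lamm * ξ) * F ξ) + lamp * (Real.exp (lamp * ξ) * K (-ξ))) := by
      rw [show Real.exp (lamp * ξ) * (k (-ξ) * (-1)) = -(Real.exp (lamp * ξ) * k (-ξ)) by ring,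
        ecan1, ecan2]
      ring
    exact hval ▸ key
  -- bounds on F and K
  have hFb : ∀ ξ : ℝ, |F ξ| ≤ M * Real.exp (-lamm * ξ) / (-lamm) := by
    intro ξ
    have h1 : |F ξ| ≤ ∫ z in Set.Iic ξ, ‖g z‖ := by
      simpa [Real.norm_eq_abs] using norm_integral_le_integral_norm (μ := volume.restrict (Set.Iic ξ)) g
    have h2 : (∫ z in Set.Iic ξ, ‖g z‖) ≤ ∫ z in Set.Iic ξ, M * Real.exp (-lamm * z) := by
      refine integral_mono ((hg_int ξ).norm) ((integrableOn_expMul_Iic (-lamm) hb1 ξ).const_mul M)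
        fun z => ?_
      simp only [hg_def, Real.norm_eq_abs, abs_mul, abs_of_pos (Real.exp_pos _)]
      have := hfb z
      nlinarith [Real.exp_pos (-lamm * z), abs_nonneg (f z)]
    have h3 : (∫ z in Set.Iic ξ, M * Real.exp (-lamm * z)) = M * (Real.exp (-lamm * ξ) / (-lamm)) := by
      rw [MeasureTheory.integral_const_mul, integral_expMul_Iic (-lamm) hb1 ξ]
    calc |F ξ| ≤ _ := h1
      _ ≤ _ := h2
      _ = M * Real.exp (-lamm * ξ) / (-lamm) := by rw [h3]; ring
  have hKb : ∀ t : ℝ, |K t| ≤ M * Real.exp (lamp * t) / lamp := by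
    intro t
    have h1 : |K t| ≤ ∫ z in Set.Iic t, ‖k z‖ := by
      simpa [Real.norm_eq_abs] using norm_integral_le_integral_norm (μ := volume.restrict (Set.Iic t)) k
    have h2 : (∫ z in Set.Iic t, ‖k z‖) ≤ ∫ z in Set.Iic t, M * Real.exp (lamp * z) := by
      refine integral_mono ((hk_int t).norm) ((integrableOn_expMul_Iic lamp hlp t).const_mul M)
        fun z => ?_
      simp only [hk_def, Real.norm_eq_abs, abs_mul, abs_of_pos (Real.exp_pos _)]
      have := hfb (-z)
      nlinarith [Real.exp_pos (lamp * z), abs_nonneg (f (-z))]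
    have h3 : (∫ z in Set.Iic t, M * Real.exp (lamp * z)) = M * (Real.exp (lamp * t) / lamp) := by
      rw [MeasureTheory.integral_const_mul, integral_expMul_Iic lamp hlp t]
    calc |K t| ≤ _ := h1
      _ ≤ _ := h2
      _ = M * Real.exp (lamp * t) / lamp := by rw [h3]; ring
  refine ⟨fun ξ => (hu' ξ).differentiableAt, fun ξ => ?_⟩
  rw [(hu' ξ).deriv]
  have hImb : |lamm * (Real.exp (lamm * ξ) * F ξ)| ≤ M := by
    rw [abs_mul, abs_mul, abs_of_pos (Real.exp_pos _), abs_of_neg hlm]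
    have h1 := hFb ξ
    have h2 : Real.exp (lamm * ξ) * Real.exp (-lamm * ξ) = 1 := by
      rw [← Real.exp_add, show lamm * ξ + -lamm * ξ = 0 by ring, Real.exp_zero]
    have h1' : |F ξ| * (-lamm) ≤ M * Real.exp (-lamm * ξ) := (le_div_iff₀ hb1).mp h1
    have h3 := mul_le_mul_of_nonneg_left h1' (Real.exp_pos (lamm * ξ)).le
    have h5 : Real.exp (lamm * ξ) * (M * Real.exp (-lamm * ξ)) = M := by
      rw [show Real.exp (lamm * ξ) * (M * Real.exp (-lamm * ξ))
          = Real.exp (lamm * ξ) * Real.exp (-lamm * ξ) * M by ring, h2, one_mul]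
    rw [h5] at h3
    linarith [h3]
  have hIpb : |lamp * (Real.exp (lamp * ξ) * K (-ξ))| ≤ M := by
    rw [abs_mul, abs_mul, abs_of_pos (Real.exp_pos _), abs_of_pos hlp]
    have h1 := hKb (-ξ)
    have h2 : Real.exp (lamp * ξ) * Real.exp (lamp * -ξ) = 1 := by
      rw [← Real.exp_add, show lamp * ξ + lamp * -ξ = 0 by ring, Real.exp_zero]
    have h1' : |K (-ξ)| * lamp ≤ M * Real.exp (lamp * -ξ) := (le_div_iff₀ hlp).mp h1
    have h3 := mul_le_mul_of_nonneg_left h1' (Real.exp_pos (lamp * ξ)).le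
    have h5 : Real.exp (lamp * ξ) * (M * Real.exp (lamp * -ξ)) = M := by
      rw [show Real.exp (lamp * ξ) * (M * Real.exp (lamp * -ξ))
          = Real.exp (lamp * ξ) * Real.exp (lamp * -ξ) * M by ring, h2, one_mul]
    rw [h5] at h3
    linarith [h3]
  calc |c * (lamm * (Real.exp (lamm * ξ) * F ξ) + lamp * (Real.exp (lamp * ξ) * K (-ξ)))|
      ≤ c * (|lamm * (Real.exp (lamm * ξ) * F ξ)| + |lamp * (Real.exp (lamp * ξ) * K (-ξ))|) := by
        rw [abs_mul, abs_of_pos hc]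
        exact mul_le_mul_of_nonneg_left (abs_add_le _ _) hc.le
    _ ≤ c * (M + M) := by
        exact mul_le_mul_of_nonneg_left (add_le_add hImb hIpb) hc.le
    _ = 2 * M / (d * (lamp - lamm)) := by
        rw [hc_def]; ring
end

section
/- Let c1, c2 > 0, let d_W, d_H, r_W, r_H, c_W, c_H > 0 with c_W < r_W and c_H < r_H, and let κ1, κ2 > 0. Define F(W, H) = (c1/d_W) r_W W (1 − W − κ1 H − c_W/r_W) + (c2/d_H) r_H H (1 − H − κ2 W − c_H/r_H), H̃ = min{1 − c_H/r_H, (1/κ1)(1 − c_W/r_W)} and W̃ = min{1 − c_W/r_W, (1/κ2)(1 − c_H/r_H)}. Then: (a) F(t W̃, (1−t) H̃) ≥ 0 for every t ∈ [0,1]; (b) F(W, 0) ≥ 0 for every W with 0 ≤ W ≤ W̃; and (c) F(0, H) ≥ 0 for every H with 0 ≤ H ≤ H̃. In particular, the three line segments L1 = {t(W̃,0) + (1−t)(0,H̃) : t ∈ (0,1)}, L2 = {(W,0) : 0 ≤ W ≤ W̃}, L3 = {(0,H) : 0 ≤ H ≤ H̃} are contained in the region E = {(W,H) : W ≥ 0,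 H ≥ 0, F(W,H) ≥ 0}. -/
open Real

/-- The N-barrier segments lie in the region `E = {F ≥ 0}`: nonnegativity of the
barrier function `F` on the segment joining `(W̃, 0)` and `(0, H̃)` and on the two
coordinate segments. -/
theorem n_barrier_segments_in_E
    (c1 c2 dW dH rW rH cW cH κ1 κ2 : ℝ)
    (hc1 : 0 < c1) (hc2 : 0 < c2)
    (hdW : 0 < dW) (hdH : 0 < dH) (hrW : 0 < rW) (hrH : 0 < rH)
    (hcW : 0 < cW) (hcH : 0 < cH)
    (hcWr : cW < rW) (hcHr : cH < rH)
    (hκ1 : 0 < κ1) (hκ2 : 0 < κ2)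
    (F : ℝ → ℝ → ℝ)
    (hF : ∀ w h, F w h =
      (c1 / dW) * rW * w * (1 - w - κ1 * h - cW / rW) +
      (c2 / dH) * rH * h * (1 - h - κ2 * w - cH / rH))
    (Wt Ht : ℝ)
    (hWt : Wt = min (1 - cW / rW) ((1 / κ2) * (1 - cH / rH)))
    (hHt : Ht = min (1 - cH / rH) ((1 / κ1) * (1 - cW / rW))) :
    (∀ t ∈ Set.Icc (0 : ℝ) 1, F (t * Wt) ((1 - t) * Ht) ≥ 0) ∧
    (∀ w : ℝ, 0 ≤ w → w ≤ Wt → F w 0 ≥ 0) ∧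
    (∀ h : ℝ, 0 ≤ h → h ≤ Ht → F 0 h ≥ 0) ∧
    ({p : ℝ × ℝ | ∃ t ∈ Set.Ioo (0 : ℝ) 1, p = (t * Wt, (1 - t) * Ht)} ⊆
      {p : ℝ × ℝ | 0 ≤ p.1 ∧ 0 ≤ p.2 ∧ F p.1 p.2 ≥ 0}) ∧
    ({p : ℝ × ℝ | 0 ≤ p.1 ∧ p.1 ≤ Wt ∧ p.2 = 0} ⊆
      {p : ℝ × ℝ | 0 ≤ p.1 ∧ 0 ≤ p.2 ∧ F p.1 p.2 ≥ 0}) ∧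
    ({p : ℝ × ℝ | p.1 = 0 ∧ 0 ≤ p.2 ∧ p.2 ≤ Ht} ⊆
      {p : ℝ × ℝ | 0 ≤ p.1 ∧ 0 ≤ p.2 ∧ F p.1 p.2 ≥ 0}) := by
  have hA : (0:ℝ) ≤ 1 - cW / rW := by
    have : cW / rW < 1 := (div_lt_one hrW).mpr hcWr
    linarith
  have hB : (0:ℝ) ≤ 1 - cH / rH := by
    have : cH / rH < 1 := (div_lt_one hrH).mpr hcHr
    linarith
  have hWt0 : 0 ≤ Wt := by
    rw [hWt]; exact le_min hA (by positivity)
  have hHt0 : 0 ≤ Ht := by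
    rw [hHt]; exact le_min hB (by positivity)
  have hWtA : Wt ≤ 1 - cW / rW := hWt ▸ min_le_left _ _
  have hHtB : Ht ≤ 1 - cH / rH := hHt ▸ min_le_left _ _
  have hκ2Wt : κ2 * Wt ≤ 1 - cH / rH := by
    have h1 : Wt ≤ (1 / κ2) * (1 - cH / rH) := hWt ▸ min_le_right _ _
    have := mul_le_mul_of_nonneg_left h1 hκ2.le
    calc κ2 * Wt ≤ κ2 * ((1 / κ2) * (1 - cH / rH)) := this
      _ = 1 - cH / rH := by field_simp
  have hκ1Ht : κ1 * Ht ≤ 1 - cW / rW := by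
    have h1 : Ht ≤ (1 / κ1) * (1 - cW / rW) := hHt ▸ min_le_right _ _
    have := mul_le_mul_of_nonneg_left h1 hκ1.le
    calc κ1 * Ht ≤ κ1 * ((1 / κ1) * (1 - cW / rW)) := this
      _ = 1 - cW / rW := by field_simp
  -- main lemma
  have key : ∀ w h : ℝ, 0 ≤ w → 0 ≤ h → w + κ1 * h ≤ 1 - cW / rW →
      h + κ2 * w ≤ 1 - cH / rH → F w h ≥ 0 := by
    intro w h hw hh h1 h2
    rw [hF]
    have t1 : 0 ≤ (c1 / dW) * rW * w * (1 - w - κ1 * h - cW / rW) := by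
      apply mul_nonneg
      · positivity
      · linarith
    have t2 : 0 ≤ (c2 / dH) * rH * h * (1 - h - κ2 * w - cH / rH) := by
      apply mul_nonneg
      · positivity
      · linarith
    linarith
  have seg : ∀ t ∈ Set.Icc (0 : ℝ) 1, F (t * Wt) ((1 - t) * Ht) ≥ 0 := by
    intro t ht
    obtain ⟨ht0, ht1⟩ := ht
    apply key
    · exact mul_nonneg ht0 hWt0
    · exact mul_nonneg (by linarith) hHt0
    · nlinarith
    · nlinarith
  have base : ∀ w : ℝ, 0 ≤ w → w ≤ Wt → F w 0 ≥ 0 := by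
    intro w hw hwW
    apply key _ _ hw le_rfl <;> nlinarith
  have side : ∀ h : ℝ, 0 ≤ h → h ≤ Ht → F 0 h ≥ 0 := by
    intro h hh hhH
    apply key _ _ le_rfl hh <;> nlinarith
  refine ⟨seg, base, side, ?_, ?_, ?_⟩
  · rintro ⟨x, y⟩ ⟨t, ht, hp⟩
    obtain ⟨rfl, rfl⟩ := Prod.mk.injEq .. ▸ hp
    exact ⟨mul_nonneg ht.1.le hWt0, mul_nonneg (by linarith [ht.2]) hHt0,
      seg t ⟨ht.1.le, ht.2.le⟩⟩
  · rintro ⟨x, y⟩ ⟨hx0, hxW, rfl⟩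
    exact ⟨hx0, le_rfl, base x hx0 hxW⟩
  · rintro ⟨x, y⟩ ⟨rfl, hy0, hyH⟩
    exact ⟨le_rfl, hy0, side y hy0 hyH⟩
end

section
/- Let c1, c2 > 0, let d_W, d_H, r_W, r_H, c_W, c_H > 0, and let κ1, κ2 ∈ (0,1). Define F(W, H) = (c1/d_W) r_W W (1 − W − κ1 H − c_W/r_W) + (c2/d_H) r_H H (1 − H − κ2 W − c_H/r_H), H_* = r_H/(r_H + c_H), and let (W*, H*) be the first two components of the coexistence state. Then F(0, H_*) < 0 and F(W*, H*) < 0; in particular neither (0, H_*) nor (W*, H*) lies in the region E = {(W,H) : W ≥ 0, H ≥ 0, F(W,H) ≥ 0}. -/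
open Real

/-- Neither the grass-vegetation state `(0, H_*)` nor the coexistence state
`(W*, H*)` lies in the N-barrier region `E = {F ≥ 0}`: the barrier function is
strictly negative at both. -/
theorem states_not_in_E
    (c1 c2 dW dH rW rH cW cH κ1 κ2 : ℝ)
    (hc1 : 0 < c1) (hc2 : 0 < c2)
    (hdW : 0 < dW) (hdH : 0 < dH) (hrW : 0 < rW) (hrH : 0 < rH)
    (hcW : 0 < cW) (hcH : 0 < cH)
    (hκ1 : 0 < κ1) (hκ1' : κ1 < 1) (hκ2 : 0 < κ2) (hκ2' : κ2 < 1)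
    (F : ℝ → ℝ → ℝ)
    (hF : ∀ w h, F w h =
      (c1 / dW) * rW * w * (1 - w - κ1 * h - cW / rW) +
      (c2 / dH) * rH * h * (1 - h - κ2 * w - cH / rH))
    (Hgv D Wstar Hstar : ℝ)
    (hHgv : Hgv = rH / (rH + cH))
    (hD : D = (rW + cW) * (rH + cH) - rW * rH * κ1 * κ2)
    (hWstar : Wstar = (rW * (rH + cH) - rW * rH * κ1) / D)
    (hHstar : Hstar = (rH * (rW + cW) - rW * rH * κ2) / D) :
    F 0 Hgv < 0 ∧ F Wstar Hstar < 0 ∧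
    (0, Hgv) ∉ {p : ℝ × ℝ | 0 ≤ p.1 ∧ 0 ≤ p.2 ∧ F p.1 p.2 ≥ 0} ∧
    (Wstar, Hstar) ∉ {p : ℝ × ℝ | 0 ≤ p.1 ∧ 0 ≤ p.2 ∧ F p.1 p.2 ≥ 0} := by
  have hk12 : κ1 * κ2 < 1 := by nlinarith
  have hD0 : 0 < D := by
    rw [hD]
    nlinarith [mul_pos (mul_pos hrW hrH) (sub_pos.mpr hk12), mul_pos hrW hcH,
      mul_pos hcW hrH, mul_pos hcW hcH]
  have hDne : D ≠ 0 := ne_of_gt hD0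
  have hrHcH : 0 < rH + cH := by linarith
  have hrWcW : 0 < rW + cW := by linarith
  have hHgv0 : 0 < Hgv := by rw [hHgv]; positivity
  have hbr : 1 - Hgv - cH / rH < 0 := by
    have key : (rH * (rH + cH)) * (1 - Hgv - cH / rH) = -(cH ^ 2) := by
      rw [hHgv]; field_simp; ring
    nlinarith [mul_pos hrH hrHcH, mul_pos hcH hcH]
  have h1 : F 0 Hgv < 0 := by
    rw [hF]
    have e0 : (c1 / dW) * rW * 0 * (1 - 0 - κ1 * Hgv - cW / rW) = 0 := by ring
    rw [e0, zero_add]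
    exact mul_neg_of_pos_of_neg (by positivity) (by linarith)
  have hW0 : 0 < Wstar := by
    rw [hWstar]
    apply div_pos _ hD0
    nlinarith [mul_pos (mul_pos hrW hrH) (sub_pos.mpr hκ1'), mul_pos hrW hcH]
  have hH0 : 0 < Hstar := by
    rw [hHstar]
    apply div_pos _ hD0
    nlinarith [mul_pos (mul_pos hrW hrH) (sub_pos.mpr hκ2'), mul_pos hrH hcW]
  have hb1 : 1 - Wstar - κ1 * Hstar - cW / rW < 0 := by
    have key : rW * D * (1 - Wstar - κ1 * Hstar - cW / rW)
        = -(cW * (cW * (rH + cH) + rW * rH * κ1 * (1 - κ2))) := by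
      rw [hWstar, hHstar]
      field_simp
      rw [hD]; ring
    have hpos : 0 < cW * (cW * (rH + cH) + rW * rH * κ1 * (1 - κ2)) := by
      have h12 : 0 < 1 - κ2 := by linarith
      positivity
    by_contra hcon
    push_neg at hcon
    have h0 : 0 ≤ rW * D * (1 - Wstar - κ1 * Hstar - cW / rW) :=
      mul_nonneg (le_of_lt (mul_pos hrW hD0)) hcon
    rw [key] at h0
    linarith
  have hb2 : 1 - Hstar - κ2 * Wstar - cH / rH < 0 := by
    have key : rH * D * (1 - Hstar - κ2 * Wstar - cH / rH)
        = -(cH * (cH * (rW + cW) + rW * rH * κ2 * (1 - κ1))) := by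
      rw [hWstar, hHstar]
      field_simp
      rw [hD]; ring
    have hpos : 0 < cH * (cH * (rW + cW) + rW * rH * κ2 * (1 - κ1)) := by
      have h11 : 0 < 1 - κ1 := by linarith
      positivity
    by_contra hcon
    push_neg at hcon
    have h0 : 0 ≤ rH * D * (1 - Hstar - κ2 * Wstar - cH / rH) :=
      mul_nonneg (le_of_lt (mul_pos hrH hD0)) hcon
    rw [key] at h0
    linarith
  have h2 : F Wstar Hstar < 0 := by
    rw [hF]
    have t1 : (c1 / dW) * rW * Wstar * (1 - Wstar - κ1 * Hstar - cW / rW) < 0 :=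
      mul_neg_of_pos_of_neg (by positivity) hb1
    have t2 : (c2 / dH) * rH * Hstar * (1 - Hstar - κ2 * Wstar - cH / rH) < 0 :=
      mul_neg_of_pos_of_neg (by positivity) hb2
    linarith
  refine ⟨h1, h2, fun hmem => absurd hmem.2.2 (not_le.mpr h1),
    fun hmem => absurd hmem.2.2 (not_le.mpr h2)⟩
end

section
/- Assume all parameters d_W, d_H, d_G, d_B, r_W, r_H, c_W, c_H, e_W, e_H are positive, κ1 = 0, κ2 ∈ (0,1), d_B > 2 d_W > 0, 1 − c_W/r_W > 0 and 1 − κ2 − c_H/r_H > 0, and let s satisfy max{2√(d_W r_W), 2√(d_H r_H)} < s < min{d_B √(r_W/(d_B − d_W)), 2√(d_B e_W (1 − c_W/r_W))}. Set λ_W = (s − √(s² − 4 d_W r_W))/(2 d_W), η_W = (s + √(s² − 4 d_W r_W))/(2 d_W), λ_B = s/d_B. Choose ϖ ∈ (0, 1 − c_W/r_W), h ∈ (0, 1 − κ2 − c_H/r_H), δ_W ∈ (1, min{2, η_W/λ_W, (λ_W + λ_B)/λ_W}), ω > (r_W + c_W)/(−(d_W (δ_W λ_W)² − s (δ_W λ_W)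 + r_W)), and β, b > 0 with −2 d_B β − s²/(4 d_B) + e_W(ϖ − b) > 0. Then there exist ξ_W < 0 and ξ_B > 0 such that, defining W̄(ξ) = 1 for ξ ≥ 0 and e^{λ_W ξ} for ξ ≤ 0; B̄(ξ) = 1 for ξ ≥ 0 and e^{λ_B ξ} for ξ ≤ 0; W̲(ξ) = ϖ for ξ ≥ ξ_W and e^{λ_W ξ} − ω e^{δ_W λ_W ξ} for ξ ≤ ξ_W; B̲(ξ) = b for ξ ≥ ξ_B and b e^{−β(ξ − ξ_B)²} for ξ ≤ ξ_B; H̄ = Ḡ ≡ 1 and H̲ = G̲ ≡ h, the following hold on ℝ ∖ {ξ_W, 0, ξ_B}: d_W W̄'' − s W̄' + r_W W̄(1 − W̄) − c_W B̲ W̄ ≤ 0; d_W W̲'' − s W̲' + r_W W̲(1 − W̲) − c_W B̄ W̲ ≥ 0; r_H (1 − 1 − κ2 W̲) − c_H h ≤ 0; r_H h (1 − h − κ2 W̄) − c_H h ≥ 0; e_H (1 − 1) ≤ 0; e_H h (h − h) ≥ 0; d_B B̄'' − s B̄' + e_W B̄(W̄ − B̄) ≤ 0; d_B B̲'' − s B̲'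 + e_W B̲(W̲ − B̲) ≥ 0; moreover at each point of {ξ_W, 0, ξ_B} the one-sided derivatives satisfy W̄'(ξ⁺) ≤ W̄'(ξ⁻), B̄'(ξ⁺) ≤ B̄'(ξ⁻), W̲'(ξ⁻) ≤ W̲'(ξ⁺) and B̲'(ξ⁻) ≤ B̲'(ξ⁺). -/
open Real

private lemma hasDerivAt_expmul (a x : ℝ) :
    HasDerivAt (fun y => Real.exp (a * y)) (a * Real.exp (a * x)) x := by
  have h := ((hasDerivAt_id x).const_mul a).exp
  simpa [mul_comm] using h

private lemma deriv_expmul (a : ℝ) :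
    deriv (fun y => Real.exp (a * y)) = fun x => a * Real.exp (a * x) := by
  funext x; exact (hasDerivAt_expmul a x).deriv

private lemma deriv2_expmul (a x : ℝ) :
    deriv (deriv (fun y => Real.exp (a * y))) x = a ^ 2 * Real.exp (a * x) := by
  rw [deriv_expmul]
  have := ((hasDerivAt_expmul a x).const_mul a).deriv
  rw [this]; ring

private lemma hasDerivAt_gauss (b β c x : ℝ) :
    HasDerivAt (fun y => b * Real.exp (-β * (y - c) ^ 2))
      ((-2 * β * (x - c)) * (b * Real.exp (-β * (x - c) ^ 2))) x := by
  have h1 : HasDerivAt (fun y : ℝ => -β * (y - c) ^ 2) (-β * (2 * (x - c))) x := by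
    have := (((hasDerivAt_id x).sub_const c).pow 2).const_mul (-β)
    simpa using this
  have h2 := (h1.exp).const_mul b
  exact h2.congr_deriv (by ring)

private lemma deriv_gauss (b β c : ℝ) :
    deriv (fun y => b * Real.exp (-β * (y - c) ^ 2))
      = fun x => (-2 * β * (x - c)) * (b * Real.exp (-β * (x - c) ^ 2)) := by
  funext x; exact (hasDerivAt_gauss b β c x).deriv

private lemma deriv2_gauss (b β c x : ℝ) :
    deriv (deriv (fun y => b * Real.exp (-β * (y - c) ^ 2))) x
      = (-2 * β + (2 * β * (x - c)) ^ 2) * (b * Real.exp (-β * (x - c) ^ 2)) := by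
  rw [deriv_gauss]
  have h1 : HasDerivAt (fun y : ℝ => -2 * β * (y - c)) (-2 * β) x := by
    have := ((hasDerivAt_id x).sub_const c).const_mul (-2 * β)
    simpa using this
  have h2 := h1.mul (hasDerivAt_gauss b β c x)
  exact h2.deriv.trans (by ring)

private lemma hasDerivAt_fL (a c ω x : ℝ) :
    HasDerivAt (fun y => Real.exp (a * y) - ω * Real.exp (c * y))
      (a * Real.exp (a * x) - ω * (c * Real.exp (c * x))) x :=
  (hasDerivAt_expmul a x).sub ((hasDerivAt_expmul c x).const_mul ω)

private lemma deriv_fL (a c ω : ℝ) :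
    deriv (fun y => Real.exp (a * y) - ω * Real.exp (c * y))
      = fun x => a * Real.exp (a * x) - ω * (c * Real.exp (c * x)) := by
  funext x; exact (hasDerivAt_fL a c ω x).deriv

private lemma deriv2_fL (a c ω x : ℝ) :
    deriv (deriv (fun y => Real.exp (a * y) - ω * Real.exp (c * y))) x
      = a ^ 2 * Real.exp (a * x) - ω * (c ^ 2 * Real.exp (c * x)) := by
  rw [deriv_fL]
  have h := ((hasDerivAt_expmul a x).const_mul a).sub
    (((hasDerivAt_expmul c x).const_mul c).const_mul ω)
  exact h.deriv.trans (by ring)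

private lemma deriv_congr_open {f g : ℝ → ℝ} {U : Set ℝ} (hU : IsOpen U)
    (h : ∀ x ∈ U, f x = g x) {x : ℝ} (hx : x ∈ U) :
    deriv f x = deriv g x :=
  (Filter.eventuallyEq_of_mem (hU.mem_nhds hx) h).deriv_eq

private lemma deriv2_congr_open {f g : ℝ → ℝ} {U : Set ℝ} (hU : IsOpen U)
    (h : ∀ x ∈ U, f x = g x) {x : ℝ} (hx : x ∈ U) :
    deriv (deriv f) x = deriv (deriv g) x :=
  deriv_congr_open hU (fun y hy => deriv_congr_open hU h hy) hx

private lemma derivWithin_Ici_of_hasDerivAt {f : ℝ → ℝ} {c x : ℝ} (h : HasDerivAt f c x) :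
    derivWithin f (Set.Ici x) x = c :=
  h.hasDerivWithinAt.derivWithin (uniqueDiffOn_Ici x x Set.self_mem_Ici)

private lemma derivWithin_Iic_of_hasDerivAt {f : ℝ → ℝ} {c x : ℝ} (h : HasDerivAt f c x) :
    derivWithin f (Set.Iic x) x = c :=
  h.hasDerivWithinAt.derivWithin (uniqueDiffOn_Iic x x Set.self_mem_Iic)

private lemma hasDerivAt_congr_open {f g : ℝ → ℝ} {U : Set ℝ} (hU : IsOpen U)
    (h : ∀ x ∈ U, f x = g x) {x : ℝ} (hx : x ∈ U) {c : ℝ} (hg : HasDerivAt g c x) :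
    HasDerivAt f c x :=
  hg.congr_of_eventuallyEq (Filter.eventuallyEq_of_mem (hU.mem_nhds hx) h)

private lemma arith_blo_key (dB s β eW piW b G u : ℝ) (hdB : 0 < dB)
    (hβb' : 0 < -8 * dB ^ 2 * β - s ^ 2 + 4 * dB * (eW * (piW - b)))
    (hbG : 0 ≤ eW * (b - G)) :
    0 ≤ dB * (-2 * β + (2 * β * u) ^ 2) + s * (2 * β * u) + eW * (piW - G) := by
  have sqh := sq_nonneg (2 * dB * β * u + s / 2)
  have h4 : 0 ≤ 4 * dB * (dB * (-2 * β + (2 * β * u) ^ 2) + s * (2 * β * u)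
      + eW * (piW - G)) := by nlinarith [sqh, hβb', hbG]
  nlinarith [h4, hdB]

private lemma arith_blo_far_key (dB s β eW b F G M u : ℝ) (hdB : 0 < dB) (hβ : 0 < β)
    (heW : 0 < eW) (hb : 0 < b) (hF : 0 ≤ F) (hGb : G ≤ b) (hM1 : 1 ≤ M)
    (hMC' : 2 * β * s + 2 * dB * β + eW * b ≤ 4 * dB * β ^ 2 * M)
    (hum : u ≤ -(1 + M)) :
    0 ≤ dB * (-2 * β + (2 * β * u) ^ 2) + s * (2 * β * u) + eW * (F - G) := by
  have hu1 : 1 ≤ -u := by linarith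
  have k1 : 2 * β * s + 2 * dB * β + eW * b + 4 * dB * β ^ 2 ≤ 4 * dB * β ^ 2 * (-u) := by
    nlinarith [mul_nonneg (show (0:ℝ) ≤ 4 * dB * β ^ 2 by positivity)
      (show (0:ℝ) ≤ -u - (1 + M) by linarith)]
  have k2 : (2 * β * s + 2 * dB * β + eW * b + 4 * dB * β ^ 2) * (-u)
      ≤ 4 * dB * β ^ 2 * (-u) * (-u) :=
    mul_le_mul_of_nonneg_right k1 (by linarith)
  nlinarith [k2, hu1, mul_nonneg heW.le (show (0:ℝ) ≤ b - G by linarith),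
    mul_nonneg heW.le hF,
    mul_nonneg (show (0:ℝ) ≤ 2 * dB * β + eW * b + 4 * dB * β ^ 2 by positivity)
      (show (0:ℝ) ≤ -u - 1 by linarith)]

set_option maxHeartbeats 1000000 in
/-- Lemma 5.1: existence of kink points `ξ_W < 0 < ξ_B` such that the piecewise
functions `(W̄, 1, 1, B̄)` and `(W̲, h, h, B̲)` form upper and lower solutions (with
`κ1 = 0`): the eight differential inequalities hold away from the kink points, and
the one-sided derivative jump conditions hold at the kink points. -/
theorem savanna_upper_lower_solutions_grass_case
    (dW dH dG dB rW rH cW cH eW eH κ2 s lamW etaW lamB piW h δW ω β b : ℝ)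
    (hdW : 0 < dW) (hdH : 0 < dH) (hdG : 0 < dG) (hdB : 0 < dB)
    (hrW : 0 < rW) (hrH : 0 < rH) (hcW : 0 < cW) (hcH : 0 < cH)
    (heW : 0 < eW) (heH : 0 < eH)
    (hκ2 : 0 < κ2) (hκ2' : κ2 < 1)
    (hBW : dB > 2 * dW)
    (hW1 : 1 - cW / rW > 0) (hH1 : 1 - κ2 - cH / rH > 0)
    (hs1 : max (2 * Real.sqrt (dW * rW)) (2 * Real.sqrt (dH * rH)) < s)
    (hs2 : s < min (dB * Real.sqrt (rW / (dB - dW)))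
        (2 * Real.sqrt (dB * eW * (1 - cW / rW))))
    (hlamW : lamW = (s - Real.sqrt (s ^ 2 - 4 * dW * rW)) / (2 * dW))
    (hetaW : etaW = (s + Real.sqrt (s ^ 2 - 4 * dW * rW)) / (2 * dW))
    (hlamB : lamB = s / dB)
    (hpiW : piW ∈ Set.Ioo 0 (1 - cW / rW))
    (hh : h ∈ Set.Ioo 0 (1 - κ2 - cH / rH))
    (hδW : δW ∈ Set.Ioo 1 (min (min 2 (etaW / lamW)) ((lamW + lamB) / lamW)))
    (hω : ω > (rW + cW) / (-(dW * (δW * lamW) ^ 2 - s * (δW * lamW) + rW)))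
    (hβ : 0 < β) (hb : 0 < b)
    (hβb : -2 * dB * β - s ^ 2 / (4 * dB) + eW * (piW - b) > 0) :
    ∃ ξW < (0 : ℝ), ∃ ξB > (0 : ℝ),
      ∀ Wup Bup Wlo Blo : ℝ → ℝ,
        (∀ ξ, Wup ξ = if 0 ≤ ξ then 1 else Real.exp (lamW * ξ)) →
        (∀ ξ, Bup ξ = if 0 ≤ ξ then 1 else Real.exp (lamB * ξ)) →
        (∀ ξ, Wlo ξ = if ξW ≤ ξ then piW
            else Real.exp (lamW * ξ) - ω * Real.exp (δW * lamW * ξ)) →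
        (∀ ξ, Blo ξ = if ξB ≤ ξ then b else b * Real.exp (-β * (ξ - ξB) ^ 2)) →
        ((∀ ξ : ℝ, ξ ≠ ξW → ξ ≠ 0 → ξ ≠ ξB →
          (dW * deriv (deriv Wup) ξ - s * deriv Wup ξ
              + rW * Wup ξ * (1 - Wup ξ) - cW * Blo ξ * Wup ξ ≤ 0) ∧
          (dW * deriv (deriv Wlo) ξ - s * deriv Wlo ξ
              + rW * Wlo ξ * (1 - Wlo ξ) - cW * Bup ξ * Wlo ξ ≥ 0) ∧
          (rH * (1 - 1 - κ2 * Wlo ξ) - cH * h ≤ 0) ∧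
          (rH * h * (1 - h - κ2 * Wup ξ) - cH * h ≥ 0) ∧
          (eH * ((1 : ℝ) - 1) ≤ 0) ∧
          (eH * h * (h - h) ≥ 0) ∧
          (dB * deriv (deriv Bup) ξ - s * deriv Bup ξ
              + eW * Bup ξ * (Wup ξ - Bup ξ) ≤ 0) ∧
          (dB * deriv (deriv Blo) ξ - s * deriv Blo ξ
              + eW * Blo ξ * (Wlo ξ - Blo ξ) ≥ 0)) ∧
        (∀ ξ ∈ ({ξW, 0, ξB} : Set ℝ),
          derivWithin Wup (Set.Ici ξ) ξ ≤ derivWithin Wup (Set.Iic ξ) ξ ∧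
          derivWithin Bup (Set.Ici ξ) ξ ≤ derivWithin Bup (Set.Iic ξ) ξ ∧
          derivWithin Wlo (Set.Iic ξ) ξ ≤ derivWithin Wlo (Set.Ici ξ) ξ ∧
          derivWithin Blo (Set.Iic ξ) ξ ≤ derivWithin Blo (Set.Ici ξ) ξ)) := by
  -- ## basic numeric facts
  have hsW : 2 * Real.sqrt (dW * rW) < s := lt_of_le_of_lt (le_max_left _ _) hs1
  have hs0 : 0 < s := lt_of_le_of_lt (by positivity) hsW
  have hD2 : 0 < s ^ 2 - 4 * dW * rW := by
    nlinarith [Real.sq_sqrt (le_of_lt (mul_pos hdW hrW)), Real.sqrt_nonneg (dW * rW)]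
  set D := Real.sqrt (s ^ 2 - 4 * dW * rW) with hDdef
  have hD0 : 0 ≤ D := Real.sqrt_nonneg _
  have hDsq : D ^ 2 = s ^ 2 - 4 * dW * rW := Real.sq_sqrt hD2.le
  have hDs : D < s := by nlinarith
  have hlamW_pos : 0 < lamW := by
    rw [hlamW]; exact div_pos (by linarith) (by positivity)
  have hsum : dW * (lamW + etaW) = s := by rw [hlamW, hetaW]; field_simp; ring
  have hprod : dW * (lamW * etaW) = rW := by
    rw [hlamW, hetaW]; field_simp; linear_combination (-1) * hDsq
  have hdBW : 0 < dB - dW := by linarith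
  have hsB : s < dB * Real.sqrt (rW / (dB - dW)) := lt_of_lt_of_le hs2 (min_le_left _ _)
  have hs2' : s ^ 2 * (dB - dW) < rW * dB ^ 2 := by
    have h1 : Real.sqrt (rW / (dB - dW)) ^ 2 = rW / (dB - dW) :=
      Real.sq_sqrt (by positivity)
    have h2 : 0 ≤ Real.sqrt (rW / (dB - dW)) := Real.sqrt_nonneg _
    have h3 : s ^ 2 < dB ^ 2 * (rW / (dB - dW)) := by nlinarith [hsB, hs0, h1, h2, hdB]
    have h4 := mul_lt_mul_of_pos_right h3 hdBW
    have h5 : dB ^ 2 * (rW / (dB - dW)) * (dB - dW) = rW * dB ^ 2 := by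
      field_simp
    rw [h5] at h4; exact h4
  have hlamB_pos : 0 < lamB := by rw [hlamB]; positivity
  have hlamBW : lamB ≤ lamW := by
    have hAB : 0 < s * (dB - 2 * dW) + dB * D := by
      have h1 : 0 < s * (dB - 2 * dW) := mul_pos hs0 (by linarith)
      linarith [mul_nonneg hdB.le hD0]
    have key : dB * D ≤ s * (dB - 2 * dW) := by nlinarith [hAB, hDsq, hs2']
    rw [hlamB, hlamW, div_le_div_iff₀ hdB (by positivity)]
    linarith [key]
  obtain ⟨hδ1, hδ2⟩ := hδW
  have hδ2a : δW < 2 := lt_of_lt_of_le hδ2 (le_trans (min_le_left _ _) (min_le_left _ _))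
  have hδη : δW * lamW < etaW := by
    have := lt_of_lt_of_le hδ2 (le_trans (min_le_left _ _) (min_le_right _ _))
    rwa [lt_div_iff₀ hlamW_pos] at this
  have hδsum : δW * lamW < lamW + lamB := by
    have := lt_of_lt_of_le hδ2 (min_le_right _ _)
    rwa [lt_div_iff₀ hlamW_pos] at this
  have hdell : lamW < δW * lamW := by
    have := mul_lt_mul_of_pos_right hδ1 hlamW_pos
    linarith [this]
  have hdel2 : δW * lamW < 2 * lamW := mul_lt_mul_of_pos_right hδ2a hlamW_pos
  have hq : 0 < -(dW * (δW * lamW) ^ 2 - s * (δW * lamW) + rW) := by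
    have hfac : -(dW * (δW * lamW) ^ 2 - s * (δW * lamW) + rW)
        = dW * (δW * lamW - lamW) * (etaW - δW * lamW) := by
      linear_combination (-(δW * lamW)) * hsum + hprod
    rw [hfac]
    exact mul_pos (mul_pos hdW (sub_pos.2 hdell)) (sub_pos.2 hδη)
  have hωq : rW + cW < ω * -(dW * (δW * lamW) ^ 2 - s * (δW * lamW) + rW) :=
    (div_lt_iff₀ hq).mp hω
  have hω0 : 0 < ω := lt_trans (div_pos (by positivity) hq) hω
  have hbpi : b < piW := by
    have hsq : 0 ≤ s ^ 2 / (4 * dB) := by positivity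
    have h7 : 0 < eW * (piW - b) := by linarith [mul_pos hdB hβ]
    rcases mul_pos_iff.mp h7 with ⟨_, h8⟩ | ⟨h8, _⟩
    · linarith
    · exact absurd h8 (not_lt.mpr heW.le)
  obtain ⟨hpi0, hpi1⟩ := hpiW
  have hpi2 : piW < 1 := by
    have : cW / rW > 0 := by positivity
    linarith
  obtain ⟨hh0, hh1⟩ := hh
  have hroot : dW * lamW ^ 2 - s * lamW + rW = 0 := by
    linear_combination lamW * hsum - hprod
  -- ## choice of the kink points
  set M : ℝ := max (max 1 (Real.log ω / ((δW - 1) * lamW)))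
      (max (1 - Real.log piW / lamW) ((2 * β * s + 2 * dB * β + eW * b) / (4 * dB * β ^ 2)))
      with hM
  have hM1 : (1 : ℝ) ≤ M := le_max_of_le_left (le_max_left _ _)
  have ht0 : 0 < (δW - 1) * lamW := mul_pos (by linarith) hlamW_pos
  have hωtail : ∀ x ≤ -M, ω * Real.exp ((δW - 1) * lamW * x) ≤ 1 := by
    intro x hx
    have h1 : Real.log ω / ((δW - 1) * lamW) ≤ M := le_max_of_le_left (le_max_right _ _)
    have hxle : x ≤ -(Real.log ω / ((δW - 1) * lamW)) := by linarith
    have h2 : (δW - 1) * lamW * x ≤ -Real.log ω := by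
      have h3 := mul_le_mul_of_nonneg_left hxle ht0.le
      have h4 : (δW - 1) * lamW * -(Real.log ω / ((δW - 1) * lamW)) = -Real.log ω := by
        field_simp
      linarith [h4 ▸ h3]
    have h3 : Real.exp ((δW - 1) * lamW * x) ≤ Real.exp (-Real.log ω) :=
      Real.exp_le_exp.mpr h2
    rw [Real.exp_neg, Real.exp_log hω0] at h3
    calc ω * Real.exp ((δW - 1) * lamW * x) ≤ ω * ω⁻¹ :=
          mul_le_mul_of_nonneg_left h3 hω0.le
    _ = 1 := mul_inv_cancel₀ (ne_of_gt hω0)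
  have hexplt : Real.exp (lamW * -M) < piW := by
    have h1 : 1 - Real.log piW / lamW ≤ M := le_max_of_le_right (le_max_left _ _)
    have h2 : lamW * -M < Real.log piW := by
      have hxle : -M ≤ Real.log piW / lamW - 1 := by linarith
      have h3 := mul_le_mul_of_nonneg_left hxle hlamW_pos.le
      have h4 : lamW * (Real.log piW / lamW - 1) = Real.log piW - lamW := by
        field_simp
      rw [h4] at h3
      linarith [hlamW_pos]
    calc Real.exp (lamW * -M) < Real.exp (Real.log piW) := Real.exp_lt_exp.mpr h2
    _ = piW := Real.exp_log hpi0
  have hMC : (2 * β * s + 2 * dB * β + eW * b) / (4 * dB * β ^ 2) ≤ M :=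
    le_max_of_le_right (le_max_right _ _)
  have hMC' : 2 * β * s + 2 * dB * β + eW * b ≤ 4 * dB * β ^ 2 * M := by
    have := (div_le_iff₀ (show (0:ℝ) < 4 * dB * β ^ 2 by positivity)).mp hMC
    linarith
  -- tail bounds for the lower W profile
  have htail : ∀ x ≤ -M, 0 ≤ Real.exp (lamW * x) - ω * Real.exp (δW * lamW * x) ∧
      Real.exp (lamW * x) - ω * Real.exp (δW * lamW * x) ≤ Real.exp (lamW * x) := by
    intro x hx
    have hsplit : Real.exp (δW * lamW * x)
        = Real.exp (lamW * x) * Real.exp ((δW - 1) * lamW * x) := by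
      rw [← Real.exp_add]; ring_nf
    constructor
    · have h1 := hωtail x hx
      have h2 : ω * Real.exp (δW * lamW * x) ≤ Real.exp (lamW * x) := by
        rw [hsplit]
        calc ω * (Real.exp (lamW * x) * Real.exp ((δW - 1) * lamW * x))
            = Real.exp (lamW * x) * (ω * Real.exp ((δW - 1) * lamW * x)) := by ring
        _ ≤ Real.exp (lamW * x) * 1 :=
            mul_le_mul_of_nonneg_left h1 (Real.exp_nonneg _)
        _ = Real.exp (lamW * x) := mul_one _
      linarith
    · have := mul_pos hω0 (Real.exp_pos (δW * lamW * x))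
      linarith
  refine ⟨-M, by linarith, 1, one_pos, ?_⟩
  intro Wup Bup Wlo Blo hWup hBup hWlo hBlo
  -- ## pointwise value facts
  have hWup_pos : ∀ x, 0 < Wup x := by
    intro x; rw [hWup]; split_ifs <;> positivity
  have hWup_le1 : ∀ x, Wup x ≤ 1 := by
    intro x; rw [hWup]; split_ifs with hc
    · exact le_refl 1
    · refine le_of_lt ?_
      calc Real.exp (lamW * x) < Real.exp 0 :=
        Real.exp_lt_exp.mpr (mul_neg_of_pos_of_neg hlamW_pos (not_le.mp hc))
      _ = 1 := Real.exp_zero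
  have hBup_pos : ∀ x, 0 < Bup x := by
    intro x; rw [hBup]; split_ifs <;> positivity
  have hBup_le1 : ∀ x, Bup x ≤ 1 := by
    intro x; rw [hBup]; split_ifs with hc
    · exact le_refl 1
    · refine le_of_lt ?_
      calc Real.exp (lamB * x) < Real.exp 0 :=
        Real.exp_lt_exp.mpr (mul_neg_of_pos_of_neg hlamB_pos (not_le.mp hc))
      _ = 1 := Real.exp_zero
  have hWlo_nonneg : ∀ x, 0 ≤ Wlo x := by
    intro x; rw [hWlo]; split_ifs with hc
    · exact hpi0.le
    · exact (htail x (by linarith [not_le.mp hc])).1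
  have hBlo_pos : ∀ x, 0 < Blo x := by
    intro x; rw [hBlo]; split_ifs <;> positivity
  have hBlo_leb : ∀ x, Blo x ≤ b := by
    intro x; rw [hBlo]; split_ifs with hc
    · exact le_refl b
    · have h1 : Real.exp (-β * (x - 1) ^ 2) ≤ 1 := by
        calc Real.exp (-β * (x - 1) ^ 2) ≤ Real.exp 0 := by
              refine Real.exp_le_exp.mpr ?_
              have := mul_nonneg hβ.le (sq_nonneg (x - 1))
              linarith
        _ = 1 := Real.exp_zero
      exact mul_le_of_le_one_right hb.le h1
  -- ## derivative facts on the open regions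
  have hWupE_hi : ∀ x ∈ Set.Ioi (0:ℝ), Wup x = (fun _ : ℝ => (1:ℝ)) x := by
    intro x hx; rw [hWup]; exact if_pos (le_of_lt hx)
  have hWupE_lo : ∀ x ∈ Set.Iio (0:ℝ), Wup x = (fun y => Real.exp (lamW * y)) x := by
    intro x hx; rw [hWup]; exact if_neg (not_le.mpr hx)
  have hBupE_hi : ∀ x ∈ Set.Ioi (0:ℝ), Bup x = (fun _ : ℝ => (1:ℝ)) x := by
    intro x hx; rw [hBup]; exact if_pos (le_of_lt hx)
  have hBupE_lo : ∀ x ∈ Set.Iio (0:ℝ), Bup x = (fun y => Real.exp (lamB * y)) x := by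
    intro x hx; rw [hBup]; exact if_neg (not_le.mpr hx)
  have hWloE_hi : ∀ x ∈ Set.Ioi (-M), Wlo x = (fun _ : ℝ => piW) x := by
    intro x hx; rw [hWlo]; exact if_pos (le_of_lt hx)
  have hWloE_lo : ∀ x ∈ Set.Iio (-M),
      Wlo x = (fun y => Real.exp (lamW * y) - ω * Real.exp (δW * lamW * y)) x := by
    intro x hx; rw [hWlo]; exact if_neg (not_le.mpr hx)
  have hBloE_hi : ∀ x ∈ Set.Ioi (1:ℝ), Blo x = (fun _ : ℝ => b) x := by
    intro x hx; rw [hBlo]; exact if_pos (le_of_lt hx)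
  have hBloE_lo : ∀ x ∈ Set.Iio (1:ℝ),
      Blo x = (fun y => b * Real.exp (-β * (y - 1) ^ 2)) x := by
    intro x hx; rw [hBlo]; exact if_neg (not_le.mpr hx)
  have hMneg : -M < 0 := by linarith
  constructor
  · -- ### the differential inequalities
    intro ξ hξW hξ0 hξB
    refine ⟨?_, ?_, ?_, ?_, by norm_num, by simp, ?_, ?_⟩
    · -- Wup upper-solution inequality
      rcases lt_or_gt_of_ne hξ0 with hlt | hgt
      · have hmem : ξ ∈ Set.Iio (0:ℝ) := hlt
        have d1 : deriv Wup ξ = lamW * Real.exp (lamW * ξ) := by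
          rw [deriv_congr_open isOpen_Iio hWupE_lo hmem, deriv_expmul]
        have d2 : deriv (deriv Wup) ξ = lamW ^ 2 * Real.exp (lamW * ξ) := by
          rw [deriv2_congr_open isOpen_Iio hWupE_lo hmem, deriv2_expmul]
        have hv : Wup ξ = Real.exp (lamW * ξ) := hWupE_lo ξ hmem
        rw [d1, d2, hv]
        set E : ℝ := Real.exp (lamW * ξ) with hE
        have hEpos : 0 < E := Real.exp_pos _
        have key : dW * (lamW ^ 2 * E) - s * (lamW * E) + rW * E = 0 := by
          linear_combination E * hroot
        linarith [key, mul_pos hrW (mul_pos hEpos hEpos),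
          mul_pos (mul_pos hcW (hBlo_pos ξ)) hEpos]
      · have hmem : ξ ∈ Set.Ioi (0:ℝ) := hgt
        have d1 : deriv Wup ξ = 0 := by
          rw [deriv_congr_open isOpen_Ioi hWupE_hi hmem]; simp
        have d2 : deriv (deriv Wup) ξ = 0 := by
          rw [deriv2_congr_open isOpen_Ioi hWupE_hi hmem]; simp
        have hv : Wup ξ = 1 := hWupE_hi ξ hmem
        rw [d1, d2, hv]
        linarith [mul_pos hcW (hBlo_pos ξ)]
    · -- Wlo lower-solution inequality
      rcases lt_or_gt_of_ne hξW with hlt | hgt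
      · have hmem : ξ ∈ Set.Iio (-M) := hlt
        have hξneg : ξ < 0 := lt_trans hlt hMneg
        have d1 : deriv Wlo ξ = lamW * Real.exp (lamW * ξ)
            - ω * (δW * lamW * Real.exp (δW * lamW * ξ)) := by
          rw [deriv_congr_open isOpen_Iio hWloE_lo hmem, deriv_fL]
        have d2 : deriv (deriv Wlo) ξ = lamW ^ 2 * Real.exp (lamW * ξ)
            - ω * ((δW * lamW) ^ 2 * Real.exp (δW * lamW * ξ)) := by
          rw [deriv2_congr_open isOpen_Iio hWloE_lo hmem, deriv2_fL]
        have hv : Wlo ξ = Real.exp (lamW * ξ) - ω * Real.exp (δW * lamW * ξ) :=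
          hWloE_lo ξ hmem
        have hvB : Bup ξ = Real.exp (lamB * ξ) := hBupE_lo ξ hξneg
        rw [d1, d2, hv, hvB]
        set E1 : ℝ := Real.exp (lamW * ξ) with hE1
        set E2 : ℝ := Real.exp (δW * lamW * ξ) with hE2
        set EB : ℝ := Real.exp (lamB * ξ) with hEB
        have hE1pos : 0 < E1 := Real.exp_pos _
        have hE2pos : 0 < E2 := Real.exp_pos _
        have hEBpos : 0 < EB := Real.exp_pos _
        have hF := htail ξ hlt.le
        have hE12 : E1 * E1 ≤ E2 := by
          rw [hE1, hE2, ← Real.exp_add]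
          refine Real.exp_le_exp.mpr ?_
          have := mul_pos_of_neg_of_neg (show δW * lamW - 2 * lamW < 0 by linarith) hξneg
          linarith [this]
        have hEBE1 : EB * E1 ≤ E2 := by
          rw [hE1, hE2, hEB, ← Real.exp_add]
          refine Real.exp_le_exp.mpr ?_
          have := mul_pos_of_neg_of_neg
            (show δW * lamW - (lamW + lamB) < 0 by linarith) hξneg
          linarith [this]
        have lin : dW * (lamW ^ 2 * E1 - ω * ((δW * lamW) ^ 2 * E2))
            - s * (lamW * E1 - ω * (δW * lamW * E2)) + rW * (E1 - ω * E2)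
            = ω * -(dW * (δW * lamW) ^ 2 - s * (δW * lamW) + rW) * E2 := by
          linear_combination E1 * hroot
        have hge : (rW + cW) * E2
            ≤ ω * -(dW * (δW * lamW) ^ 2 - s * (δW * lamW) + rW) * E2 :=
          mul_le_mul_of_nonneg_right hωq.le hE2pos.le
        set F : ℝ := E1 - ω * E2 with hFdef
        have hF0 : 0 ≤ F := hF.1
        have hFE1 : F ≤ E1 := hF.2
        have hbound1 : rW * (F * F) ≤ rW * E2 := by
          have h1 : F * F ≤ E1 * E1 := mul_self_le_mul_self hF0 hFE1
          exact mul_le_mul_of_nonneg_left (le_trans h1 hE12) hrW.le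
        have hbound2 : cW * (EB * F) ≤ cW * E2 := by
          have h1 : EB * F ≤ EB * E1 := mul_le_mul_of_nonneg_left hFE1 hEBpos.le
          exact mul_le_mul_of_nonneg_left (le_trans h1 hEBE1) hcW.le
        linarith [lin, hge, hbound1, hbound2]
      · have hmem : ξ ∈ Set.Ioi (-M) := hgt
        have d1 : deriv Wlo ξ = 0 := by
          rw [deriv_congr_open isOpen_Ioi hWloE_hi hmem]; simp
        have d2 : deriv (deriv Wlo) ξ = 0 := by
          rw [deriv2_congr_open isOpen_Ioi hWloE_hi hmem]; simp
        have hv : Wlo ξ = piW := hWloE_hi ξ hmem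
        rw [d1, d2, hv]
        have h1 : cW < (1 - piW) * rW := by
          have := (div_lt_iff₀ hrW).mp (by linarith : cW / rW < 1 - piW)
          linarith
        have h2 : cW * Bup ξ ≤ cW := mul_le_of_le_one_right hcW.le (hBup_le1 ξ)
        have hp := mul_pos hpi0 (show (0:ℝ) < (1 - piW) * rW - cW * Bup ξ by linarith)
        linarith [hp]
    · -- H lower inequality
      linarith [mul_nonneg (mul_nonneg hrH.le hκ2.le) (hWlo_nonneg ξ), mul_pos hcH hh0]
    · -- H upper inequality
      have h1 : κ2 * Wup ξ ≤ κ2 := mul_le_of_le_one_right hκ2.le (hWup_le1 ξ)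
      have h2 : cH < (1 - h - κ2) * rH := by
        have := (div_lt_iff₀ hrH).mp (by linarith : cH / rH < 1 - h - κ2)
        linarith
      have h3 := mul_nonneg (sub_nonneg.2 h1) hrH.le
      have hp := mul_pos hh0
        (show (0:ℝ) < (1 - h - κ2 * Wup ξ) * rH - cH by linarith [h2, h3])
      linarith [hp]
    · -- Bup upper-solution inequality
      rcases lt_or_gt_of_ne hξ0 with hlt | hgt
      · have hmem : ξ ∈ Set.Iio (0:ℝ) := hlt
        have d1 : deriv Bup ξ = lamB * Real.exp (lamB * ξ) := by
          rw [deriv_congr_open isOpen_Iio hBupE_lo hmem, deriv_expmul]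
        have d2 : deriv (deriv Bup) ξ = lamB ^ 2 * Real.exp (lamB * ξ) := by
          rw [deriv2_congr_open isOpen_Iio hBupE_lo hmem, deriv2_expmul]
        have hvB : Bup ξ = Real.exp (lamB * ξ) := hBupE_lo ξ hmem
        have hvW : Wup ξ = Real.exp (lamW * ξ) := hWupE_lo ξ hmem
        rw [d1, d2, hvB, hvW]
        set E1 : ℝ := Real.exp (lamW * ξ) with hE1
        set EB : ℝ := Real.exp (lamB * ξ) with hEB
        have hEBpos : 0 < EB := Real.exp_pos _
        have hE1EB : E1 ≤ EB := by
          rw [hE1, hEB]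
          refine Real.exp_le_exp.mpr ?_
          have := mul_nonneg (sub_nonneg.2 hlamBW) (neg_nonneg.2 (le_of_lt hlt))
          linarith [this]
        have hB0 : dB * lamB ^ 2 - s * lamB = 0 := by
          rw [hlamB]; field_simp; ring
        have lin : dB * (lamB ^ 2 * EB) - s * (lamB * EB) = 0 := by
          linear_combination EB * hB0
        have h1 : eW * EB * (E1 - EB) ≤ 0 :=
          mul_nonpos_of_nonneg_of_nonpos (mul_nonneg heW.le hEBpos.le) (by linarith)
        linarith [lin, h1]
      · have hmem : ξ ∈ Set.Ioi (0:ℝ) := hgt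
        have d1 : deriv Bup ξ = 0 := by
          rw [deriv_congr_open isOpen_Ioi hBupE_hi hmem]; simp
        have d2 : deriv (deriv Bup) ξ = 0 := by
          rw [deriv2_congr_open isOpen_Ioi hBupE_hi hmem]; simp
        have hvB : Bup ξ = 1 := hBupE_hi ξ hmem
        have hvW : Wup ξ = 1 := hWupE_hi ξ hmem
        rw [d1, d2, hvB, hvW]; norm_num
    · -- Blo lower-solution inequality
      rcases lt_or_gt_of_ne hξB with hlt | hgt
      · have hmem : ξ ∈ Set.Iio (1:ℝ) := hlt
        have d1 : deriv Blo ξ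
            = (-2 * β * (ξ - 1)) * (b * Real.exp (-β * (ξ - 1) ^ 2)) := by
          rw [deriv_congr_open isOpen_Iio hBloE_lo hmem, deriv_gauss]
        have d2 : deriv (deriv Blo) ξ
            = (-2 * β + (2 * β * (ξ - 1)) ^ 2) * (b * Real.exp (-β * (ξ - 1) ^ 2)) := by
          rw [deriv2_congr_open isOpen_Iio hBloE_lo hmem, deriv2_gauss]
        have hvG : Blo ξ = b * Real.exp (-β * (ξ - 1) ^ 2) := hBloE_lo ξ hmem
        have hGb : b * Real.exp (-β * (ξ - 1) ^ 2) ≤ b := by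
          have := hBlo_leb ξ
          rw [hvG] at this; exact this
        rw [d1, d2, hvG]
        set G : ℝ := b * Real.exp (-β * (ξ - 1) ^ 2) with hG
        have hGpos : 0 < G := by rw [hG]; positivity
        have hβb' : 0 < -8 * dB ^ 2 * β - s ^ 2 + 4 * dB * (eW * (piW - b)) := by
          have h1 : 0 < (-2 * dB * β - s ^ 2 / (4 * dB) + eW * (piW - b)) * (4 * dB) :=
            mul_pos hβb (by positivity)
          have h2 : (-2 * dB * β - s ^ 2 / (4 * dB) + eW * (piW - b)) * (4 * dB)
              = -8 * dB ^ 2 * β - s ^ 2 + 4 * dB * (eW * (piW - b)) := by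
            field_simp; ring
          linarith [h2 ▸ h1]
        rcases lt_or_ge (-M) ξ with hgtW | hleW
        · -- middle region: Wlo = piW
          have hvW : Wlo ξ = piW := hWloE_hi ξ hgtW
          rw [hvW]
          have key := arith_blo_key dB s β eW piW b G (ξ - 1) hdB hβb'
            (mul_nonneg heW.le (by linarith))
          linarith [mul_nonneg hGpos.le key]
        · -- far left region
          have hξltW : ξ < -M := lt_of_le_of_ne hleW (fun hcontra => hξW hcontra)
          have key := arith_blo_far_key dB s β eW b (Wlo ξ) G M (ξ - 1) hdB hβ heW hb
            (hWlo_nonneg ξ) hGb hM1 hMC' (by linarith)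
          linarith [mul_nonneg hGpos.le key]
      · have hmem : ξ ∈ Set.Ioi (1:ℝ) := hgt
        have d1 : deriv Blo ξ = 0 := by
          rw [deriv_congr_open isOpen_Ioi hBloE_hi hmem]; simp
        have d2 : deriv (deriv Blo) ξ = 0 := by
          rw [deriv2_congr_open isOpen_Ioi hBloE_hi hmem]; simp
        have hvG : Blo ξ = b := hBloE_hi ξ hmem
        have hvW : Wlo ξ = piW := hWloE_hi ξ (by
          have h1 : (1:ℝ) < ξ := hgt
          show ξ ∈ Set.Ioi (-M)
          simp only [Set.mem_Ioi]; linarith)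
        rw [d1, d2, hvG, hvW]
        have := mul_nonneg (mul_nonneg heW.le hb.le) (show (0:ℝ) ≤ piW - b by linarith)
        linarith [this]
  · -- ### jump conditions at the kink points
    intro ξ hξ
    simp only [Set.mem_insert_iff, Set.mem_singleton_iff] at hξ
    rcases hξ with rfl | rfl | rfl
    · -- at ξW = -M
      refine ⟨?_, ?_, ?_, ?_⟩
      · have hder : HasDerivAt Wup (lamW * Real.exp (lamW * -M)) (-M) :=
          hasDerivAt_congr_open isOpen_Iio hWupE_lo (show -M ∈ Set.Iio (0:ℝ) from hMneg)
            (hasDerivAt_expmul lamW (-M))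
        rw [derivWithin_Ici_of_hasDerivAt hder, derivWithin_Iic_of_hasDerivAt hder]
      · have hder : HasDerivAt Bup (lamB * Real.exp (lamB * -M)) (-M) :=
          hasDerivAt_congr_open isOpen_Iio hBupE_lo (show -M ∈ Set.Iio (0:ℝ) from hMneg)
            (hasDerivAt_expmul lamB (-M))
        rw [derivWithin_Ici_of_hasDerivAt hder, derivWithin_Iic_of_hasDerivAt hder]
      · have hIic : derivWithin Wlo (Set.Iic (-M)) (-M) = 0 := by
          apply derivWithin_zero_of_not_differentiableWithinAt
          intro hdiff
          have hcont : Filter.Tendsto Wlo (nhdsWithin (-M) (Set.Iic (-M)))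
              (nhds (Wlo (-M))) := hdiff.continuousWithinAt
          have hval : Wlo (-M) = piW := by rw [hWlo]; exact if_pos le_rfl
          rw [hval] at hcont
          have hten : Filter.Tendsto Wlo (nhdsWithin (-M) (Set.Iio (-M))) (nhds piW) :=
            hcont.mono_left (nhdsWithin_mono (-M) Set.Iio_subset_Iic_self)
          have hev : ∀ᶠ x in nhdsWithin (-M) (Set.Iio (-M)),
              Wlo x ≤ Real.exp (lamW * -M) := by
            filter_upwards [self_mem_nhdsWithin] with x hx
            have hxlt : x < -M := hx
            rw [hWlo, if_neg (not_le.mpr hxlt)]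
            calc Real.exp (lamW * x) - ω * Real.exp (δW * lamW * x)
                ≤ Real.exp (lamW * x) := (htail x hxlt.le).2
            _ ≤ Real.exp (lamW * -M) :=
                Real.exp_le_exp.mpr (mul_le_mul_of_nonneg_left hxlt.le hlamW_pos.le)
          have := le_of_tendsto hten hev
          linarith [hexplt]
        have hIci : derivWithin Wlo (Set.Ici (-M)) (-M) = 0 := by
          have hEq : Set.EqOn Wlo (fun _ : ℝ => piW) (Set.Ici (-M)) := by
            intro x hx; rw [hWlo]; exact if_pos hx
          rw [derivWithin_congr hEq (by rw [hWlo]; exact if_pos le_rfl)]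
          exact derivWithin_Ici_of_hasDerivAt (hasDerivAt_const _ _)
        rw [hIic, hIci]
      · have hder : HasDerivAt Blo
            ((-2 * β * (-M - 1)) * (b * Real.exp (-β * (-M - 1) ^ 2))) (-M) :=
          hasDerivAt_congr_open isOpen_Iio hBloE_lo (show -M ∈ Set.Iio (1:ℝ) by
            simp only [Set.mem_Iio]; linarith) (hasDerivAt_gauss b β 1 (-M))
        rw [derivWithin_Ici_of_hasDerivAt hder, derivWithin_Iic_of_hasDerivAt hder]
    · -- at 0
      refine ⟨?_, ?_, ?_, ?_⟩
      · have hIci : derivWithin Wup (Set.Ici (0:ℝ)) 0 = 0 := by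
          have hEq : Set.EqOn Wup (fun _ : ℝ => (1:ℝ)) (Set.Ici 0) := by
            intro x hx; rw [hWup]; exact if_pos hx
          rw [derivWithin_congr hEq (by rw [hWup]; exact if_pos le_rfl)]
          exact derivWithin_Ici_of_hasDerivAt (hasDerivAt_const _ _)
        have hIic : derivWithin Wup (Set.Iic (0:ℝ)) 0 = lamW := by
          have hEq : Set.EqOn Wup (fun y => Real.exp (lamW * y)) (Set.Iic 0) := by
            intro x hx
            rcases lt_or_eq_of_le (Set.mem_Iic.mp hx) with hlt | heq
            · rw [hWup]; rw [if_neg (not_le.mpr hlt)]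
            · subst heq; rw [hWup]; simp
          rw [derivWithin_congr hEq (by rw [hWup]; simp)]
          have h9 := derivWithin_Iic_of_hasDerivAt (hasDerivAt_expmul lamW 0)
          rw [h9]; simp
        rw [hIci, hIic]; exact hlamW_pos.le
      · have hIci : derivWithin Bup (Set.Ici (0:ℝ)) 0 = 0 := by
          have hEq : Set.EqOn Bup (fun _ : ℝ => (1:ℝ)) (Set.Ici 0) := by
            intro x hx; rw [hBup]; exact if_pos hx
          rw [derivWithin_congr hEq (by rw [hBup]; exact if_pos le_rfl)]
          exact derivWithin_Ici_of_hasDerivAt (hasDerivAt_const _ _)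
        have hIic : derivWithin Bup (Set.Iic (0:ℝ)) 0 = lamB := by
          have hEq : Set.EqOn Bup (fun y => Real.exp (lamB * y)) (Set.Iic 0) := by
            intro x hx
            rcases lt_or_eq_of_le (Set.mem_Iic.mp hx) with hlt | heq
            · rw [hBup]; rw [if_neg (not_le.mpr hlt)]
            · subst heq; rw [hBup]; simp
          rw [derivWithin_congr hEq (by rw [hBup]; simp)]
          have h9 := derivWithin_Iic_of_hasDerivAt (hasDerivAt_expmul lamB 0)
          rw [h9]; simp
        rw [hIci, hIic]; exact hlamB_pos.le
      · have hder : HasDerivAt Wlo 0 0 :=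
          hasDerivAt_congr_open isOpen_Ioi hWloE_hi (show (0:ℝ) ∈ Set.Ioi (-M) by
            simp only [Set.mem_Ioi]; linarith) (hasDerivAt_const _ _)
        rw [derivWithin_Ici_of_hasDerivAt hder, derivWithin_Iic_of_hasDerivAt hder]
      · have hder : HasDerivAt Blo
            ((-2 * β * ((0:ℝ) - 1)) * (b * Real.exp (-β * ((0:ℝ) - 1) ^ 2))) 0 :=
          hasDerivAt_congr_open isOpen_Iio hBloE_lo (show (0:ℝ) ∈ Set.Iio (1:ℝ) by
            norm_num) (hasDerivAt_gauss b β 1 0)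
        rw [derivWithin_Ici_of_hasDerivAt hder, derivWithin_Iic_of_hasDerivAt hder]
    · -- at ξB = 1
      refine ⟨?_, ?_, ?_, ?_⟩
      · have hder : HasDerivAt Wup 0 1 :=
          hasDerivAt_congr_open isOpen_Ioi hWupE_hi (show (1:ℝ) ∈ Set.Ioi (0:ℝ) by
            norm_num) (hasDerivAt_const _ _)
        rw [derivWithin_Ici_of_hasDerivAt hder, derivWithin_Iic_of_hasDerivAt hder]
      · have hder : HasDerivAt Bup 0 1 :=
          hasDerivAt_congr_open isOpen_Ioi hBupE_hi (show (1:ℝ) ∈ Set.Ioi (0:ℝ) by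
            norm_num) (hasDerivAt_const _ _)
        rw [derivWithin_Ici_of_hasDerivAt hder, derivWithin_Iic_of_hasDerivAt hder]
      · have hder : HasDerivAt Wlo 0 1 :=
          hasDerivAt_congr_open isOpen_Ioi hWloE_hi (show (1:ℝ) ∈ Set.Ioi (-M) by
            simp only [Set.mem_Ioi]; linarith) (hasDerivAt_const _ _)
        rw [derivWithin_Ici_of_hasDerivAt hder, derivWithin_Iic_of_hasDerivAt hder]
      · have hIci : derivWithin Blo (Set.Ici (1:ℝ)) 1 = 0 := by
          have hEq : Set.EqOn Blo (fun _ : ℝ => b) (Set.Ici 1) := by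
            intro x hx; rw [hBlo]; exact if_pos hx
          rw [derivWithin_congr hEq (by rw [hBlo]; exact if_pos le_rfl)]
          exact derivWithin_Ici_of_hasDerivAt (hasDerivAt_const _ _)
        have hIic : derivWithin Blo (Set.Iic (1:ℝ)) 1 = 0 := by
          have hEq : Set.EqOn Blo (fun y => b * Real.exp (-β * (y - 1) ^ 2)) (Set.Iic 1) := by
            intro x hx
            rcases lt_or_eq_of_le (Set.mem_Iic.mp hx) with hlt | heq
            · rw [hBlo]; rw [if_neg (not_le.mpr hlt)]
            · subst heq; rw [hBlo]; simp
          rw [derivWithin_congr hEq (by rw [hBlo]; simp)]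
          have h9 := derivWithin_Iic_of_hasDerivAt (hasDerivAt_gauss b β 1 1)
          rw [h9]; ring
        rw [hIci, hIic]
end
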